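/- arXiv:1307.6884 — 3 statements merged into one kernel-verified Lean document; each statement's English description precedes it below -/
import Mathlib

section
/- Let Φ : D² → ℝ³ be a smooth conformal immersion with conformal factor λ = log|∂_{x₁}Φ| = log|∂_{x₂}Φ|, unit normal n, and second fundamental form components Î_{ij} = π_n(∂²_{x_i x_j}Φ) (here π_n is projection onto the normal line). Then the following identity holds pointwise: ∂_{x₁}[e^{-2λ}(∂_{x₁}Φ × Î_{22} − ∂_{x₂}Φ × Î_{12})] + ∂_{x₂}[e^{-2λ}(−∂_{x₁}Φ × Î_{12} + ∂_{x₂}Φ × Î_{11})] = 0, where × denotes the cross product in ℝ³ applied componentwise (identifying the vector-valued second fundamental form with Î_{ij} = (Î_{ij}·n) n). -/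
noncomputable section

/-- Euclidean scalar product on ℝ³. -/
def dot3 (u v : Fin 3 → ℝ) : ℝ := ∑ i, u i * v i

lemma dot3_expand (u v : Fin 3 → ℝ) : dot3 u v = u 0 * v 0 + u 1 * v 1 + u 2 * v 2 := by
  simp [dot3, Fin.sum_univ_three]

lemma dot3_comm (u v : Fin 3 → ℝ) : dot3 u v = dot3 v u := by
  simp [dot3_expand]; ring

lemma dot3_smul_right (c : ℝ) (u v : Fin 3 → ℝ) : dot3 u (c • v) = c * dot3 u v := by
  simp [dot3_expand]; ring

lemma dot3_smul_left (c : ℝ) (u v : Fin 3 → ℝ) : dot3 (c • u) v = c * dot3 u v := by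
  simp [dot3_expand]; ring

lemma dot3_cross_left (a b : Fin 3 → ℝ) : dot3 a (crossProduct a b) = 0 := by
  simp [dot3_expand, cross_apply]; ring

lemma dot3_cross_right (a b : Fin 3 → ℝ) : dot3 b (crossProduct a b) = 0 := by
  simp [dot3_expand, cross_apply]; ring

lemma dot3_cross_cross (a b : Fin 3 → ℝ) :
    dot3 (crossProduct a b) (crossProduct a b)
      = dot3 a a * dot3 b b - dot3 a b * dot3 a b := by
  simp [dot3_expand, cross_apply]; ring

lemma cross_cross_left (a b : Fin 3 → ℝ) :
    crossProduct a (crossProduct a b) = dot3 a b • a - dot3 a a • b := by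
  funext i; fin_cases i <;>
    simp [dot3_expand, cross_apply, Pi.smul_apply, smul_eq_mul] <;> ring

lemma cross_cross_right (a b : Fin 3 → ℝ) :
    crossProduct b (crossProduct a b) = dot3 b b • a - dot3 a b • b := by
  funext i; fin_cases i <;>
    simp [dot3_expand, cross_apply, Pi.smul_apply, smul_eq_mul] <;> ring

lemma span3 (a b v : Fin 3 → ℝ) :
    (dot3 a a * dot3 b b - dot3 a b * dot3 a b) • v
      = (dot3 b b * dot3 v a - dot3 a b * dot3 v b) • a
        + (dot3 a a * dot3 v b - dot3 a b * dot3 v a) • b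
        + dot3 v (crossProduct a b) • crossProduct a b := by
  funext i; fin_cases i <;>
    simp [dot3_expand, cross_apply, Pi.smul_apply, smul_eq_mul] <;> ring

lemma decomp3 (a b v : Fin 3 → ℝ) (E : ℝ) (hE : 0 < E)
    (hab : dot3 a b = 0) (haa : dot3 a a = E) (hbb : dot3 b b = E)
    (hvw : dot3 v (crossProduct a b) = 0) :
    v = E⁻¹ • (dot3 v a • a + dot3 v b • b) := by
  have h := span3 a b v
  rw [hab, haa, hbb, hvw] at h
  funext i
  have hi := congrFun h i
  simp only [Pi.smul_apply, Pi.add_apply, Pi.zero_apply, smul_eq_mul, zero_mul, mul_zero,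
    sub_zero, zero_smul, add_zero] at hi ⊢
  field_simp
  apply mul_left_cancel₀ hE.ne'
  linear_combination hi

lemma hasFDerivAt_dot3 {f g : ℝ × ℝ → Fin 3 → ℝ}
    {f' g' : (ℝ × ℝ) →L[ℝ] (Fin 3 → ℝ)} {p : ℝ × ℝ}
    (hf : HasFDerivAt f f' p) (hg : HasFDerivAt g g' p) :
    HasFDerivAt (fun q => dot3 (f q) (g q))
      (∑ i : Fin 3, (f p i • ((ContinuousLinearMap.proj i).comp g')
          + g p i • ((ContinuousLinearMap.proj i).comp f'))) p := by
  have hrw : (fun q => dot3 (f q) (g q)) = fun q => ∑ i : Fin 3, f q i * g q i := by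
    funext q; rw [dot3]
  rw [hrw]
  apply HasFDerivAt.fun_sum
  intro i _
  exact (hasFDerivAt_pi'.1 hf i).mul (hasFDerivAt_pi'.1 hg i)

lemma fderiv_dot3 {f g : ℝ × ℝ → Fin 3 → ℝ} {p : ℝ × ℝ}
    (hf : DifferentiableAt ℝ f p) (hg : DifferentiableAt ℝ g p) (v : ℝ × ℝ) :
    fderiv ℝ (fun q => dot3 (f q) (g q)) p v
      = dot3 (fderiv ℝ f p v) (g p) + dot3 (f p) (fderiv ℝ g p v) := by
  rw [(hasFDerivAt_dot3 hf.hasFDerivAt hg.hasFDerivAt).fderiv]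
  simp only [ContinuousLinearMap.sum_apply, ContinuousLinearMap.add_apply,
    ContinuousLinearMap.smul_apply, ContinuousLinearMap.coe_comp', Function.comp_apply,
    ContinuousLinearMap.proj_apply, smul_eq_mul, dot3, Finset.sum_add_distrib]
  rw [add_comm]
  congr 1 <;> exact Finset.sum_congr rfl fun i _ => by ring

lemma smooth_deriv_apply {f : ℝ × ℝ → Fin 3 → ℝ} (hf : ContDiff ℝ (⊤ : ℕ∞) f) (w : ℝ × ℝ) :
    ContDiff ℝ (⊤ : ℕ∞) (fun q => fderiv ℝ f q w) :=
  (hf.fderiv_right (by simp)).clm_apply contDiff_const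

lemma fderiv_fderiv_apply {f : ℝ × ℝ → Fin 3 → ℝ} (hf : ContDiff ℝ (⊤ : ℕ∞) f) (p v w : ℝ × ℝ) :
    fderiv ℝ (fun q => fderiv ℝ f q w) p v = fderiv ℝ (fderiv ℝ f) p v w := by
  have hG : DifferentiableAt ℝ (fderiv ℝ f) p :=
    ((hf.fderiv_right (m := 1) (by exact WithTop.coe_le_coe.mpr le_top)).differentiable one_ne_zero) p
  have h := hG.hasFDerivAt.clm_apply (hasFDerivAt_const w p)
  rw [h.fderiv]
  simp

lemma mixed_symm {f : ℝ × ℝ → Fin 3 → ℝ} (hf : ContDiff ℝ (⊤ : ℕ∞) f) (p v w : ℝ × ℝ) :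
    fderiv ℝ (fun q => fderiv ℝ f q w) p v = fderiv ℝ (fun q => fderiv ℝ f q v) p w := by
  rw [fderiv_fderiv_apply hf, fderiv_fderiv_apply hf]
  exact second_derivative_symmetric
    (fun y => (hf.differentiable (by simp) y).hasFDerivAt)
    (((hf.fderiv_right (m := 1) (by exact WithTop.coe_le_coe.mpr le_top)).differentiable one_ne_zero p).hasFDerivAt) v w

theorem stmt9
    (Φ n : ℝ × ℝ → Fin 3 → ℝ) (lam : ℝ × ℝ → ℝ)
    (hΦ : ContDiff ℝ (⊤ : ℕ∞) Φ) (hn : ContDiff ℝ (⊤ : ℕ∞) n) (hlam : ContDiff ℝ (⊤ : ℕ∞) lam)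
    (Φ₁ Φ₂ : ℝ × ℝ → Fin 3 → ℝ)
    (hΦ₁ : ∀ p, Φ₁ p = fderiv ℝ Φ p (1,0))
    (hΦ₂ : ∀ p, Φ₂ p = fderiv ℝ Φ p (0,1))
    -- conformality
    (hconf₀ : ∀ p, dot3 (Φ₁ p) (Φ₂ p) = 0)
    (hconf₁ : ∀ p, dot3 (Φ₁ p) (Φ₁ p) = Real.exp (2 * lam p))
    (hconf₂ : ∀ p, dot3 (Φ₂ p) (Φ₂ p) = Real.exp (2 * lam p))
    -- unit normal
    (hndef : ∀ p, n p = Real.exp (-(2 * lam p)) • crossProduct (Φ₁ p) (Φ₂ p))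
    -- vector-valued second fundamental form Î_{ij} = (∂²_{ij}Φ · n) n
    (II11 II12 II22 : ℝ × ℝ → Fin 3 → ℝ)
    (hII11 : ∀ p, II11 p = dot3 (fderiv ℝ Φ₁ p (1,0)) (n p) • n p)
    (hII12 : ∀ p, II12 p = dot3 (fderiv ℝ Φ₁ p (0,1)) (n p) • n p)
    (hII22 : ∀ p, II22 p = dot3 (fderiv ℝ Φ₂ p (0,1)) (n p) • n p) :
    ∀ p : ℝ × ℝ,
      fderiv ℝ (fun q => Real.exp (-(2 * lam q)) •
          (crossProduct (Φ₁ q) (II22 q) - crossProduct (Φ₂ q) (II12 q))) p (1,0)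
      + fderiv ℝ (fun q => Real.exp (-(2 * lam q)) •
          (- crossProduct (Φ₁ q) (II12 q) + crossProduct (Φ₂ q) (II11 q))) p (0,1)
      = 0 := by
  have hΦ₁f : Φ₁ = fun q => fderiv ℝ Φ q (1,0) := funext hΦ₁
  have hΦ₂f : Φ₂ = fun q => fderiv ℝ Φ q (0,1) := funext hΦ₂
  have hΦ₁s : ContDiff ℝ (⊤ : ℕ∞) Φ₁ := by rw [hΦ₁f]; exact smooth_deriv_apply hΦ _
  have hΦ₂s : ContDiff ℝ (⊤ : ℕ∞) Φ₂ := by rw [hΦ₂f]; exact smooth_deriv_apply hΦ _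
  -- pointwise orthogonality and normalization
  have horth₁ : ∀ q, dot3 (Φ₁ q) (n q) = 0 := fun q => by
    rw [hndef q, dot3_smul_right, dot3_cross_left, mul_zero]
  have horth₂ : ∀ q, dot3 (Φ₂ q) (n q) = 0 := fun q => by
    rw [hndef q, dot3_smul_right, dot3_cross_right, mul_zero]
  have hnn : ∀ q, dot3 (n q) (n q) = 1 := fun q => by
    rw [hndef q, dot3_smul_right, dot3_smul_left, dot3_cross_cross,
      hconf₀ q, hconf₁ q, hconf₂ q, Real.exp_neg]
    have := (Real.exp_pos (2 * lam q)).ne'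
    field_simp
    ring
  -- derivative of n is tangential
  have hdn : ∀ q v, dot3 (fderiv ℝ n q v) (n q) = 0 := by
    intro q v
    have h1 : (fun q => dot3 (n q) (n q)) = fun _ => (1:ℝ) := funext hnn
    have h2 := fderiv_dot3 (hn.differentiable (by simp) q) (hn.differentiable (by simp) q) (p := q) v
    rw [h1, fderiv_const_apply] at h2
    simp only [Pi.zero_apply, ContinuousLinearMap.zero_apply] at h2
    have h3 := dot3_comm (n q) (fderiv ℝ n q v)
    linarith
  -- derivatives of the orthogonality relations
  have hd₁ : ∀ q v, dot3 (fderiv ℝ Φ₁ q v) (n q) = - dot3 (Φ₁ q) (fderiv ℝ n q v) := by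
    intro q v
    have h1 : (fun q => dot3 (Φ₁ q) (n q)) = fun _ => (0:ℝ) := funext horth₁
    have h2 := fderiv_dot3 (hΦ₁s.differentiable (by simp) q) (hn.differentiable (by simp) q) (p := q) v
    rw [h1, fderiv_const_apply] at h2
    simp only [Pi.zero_apply, ContinuousLinearMap.zero_apply] at h2
    linarith
  have hd₂ : ∀ q v, dot3 (fderiv ℝ Φ₂ q v) (n q) = - dot3 (Φ₂ q) (fderiv ℝ n q v) := by
    intro q v
    have h1 : (fun q => dot3 (Φ₂ q) (n q)) = fun _ => (0:ℝ) := funext horth₂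
    have h2 := fderiv_dot3 (hΦ₂s.differentiable (by simp) q) (hn.differentiable (by simp) q) (p := q) v
    rw [h1, fderiv_const_apply] at h2
    simp only [Pi.zero_apply, ContinuousLinearMap.zero_apply] at h2
    linarith
  -- symmetry of the mixed second derivative of Φ
  have hmix : ∀ q, fderiv ℝ Φ₁ q ((0:ℝ),(1:ℝ)) = fderiv ℝ Φ₂ q ((1:ℝ),(0:ℝ)) := by
    intro q
    rw [hΦ₁f, hΦ₂f]
    exact mixed_symm hΦ q (0,1) (1,0)
  -- cross product identities
  have hcross₁ : ∀ q, crossProduct (Φ₁ q) (n q) = -(Φ₂ q) := by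
    intro q
    rw [hndef q, map_smul, cross_cross_left, hconf₀ q, hconf₁ q, zero_smul, zero_sub,
      smul_neg, smul_smul, Real.exp_neg, inv_mul_cancel₀ (Real.exp_pos _).ne', one_smul]
  have hcross₂ : ∀ q, crossProduct (Φ₂ q) (n q) = Φ₁ q := by
    intro q
    rw [hndef q, map_smul, cross_cross_right, hconf₀ q, hconf₂ q, zero_smul, sub_zero,
      smul_smul, Real.exp_neg, inv_mul_cancel₀ (Real.exp_pos _).ne', one_smul]
  -- the cross product of Φ₁ and Φ₂ in terms of n
  have hcrossn : ∀ q, crossProduct (Φ₁ q) (Φ₂ q) = Real.exp (2 * lam q) • n q := by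
    intro q
    rw [hndef q, smul_smul, Real.exp_neg, mul_inv_cancel₀ (Real.exp_pos _).ne', one_smul]
  -- the tangential decomposition of derivatives of n
  have hdec : ∀ q v, fderiv ℝ n q v
      = (Real.exp (2 * lam q))⁻¹ • (dot3 (fderiv ℝ n q v) (Φ₁ q) • Φ₁ q
          + dot3 (fderiv ℝ n q v) (Φ₂ q) • Φ₂ q) := by
    intro q v
    apply decomp3 _ _ _ _ (Real.exp_pos _) (hconf₀ q) (hconf₁ q) (hconf₂ q)
    rw [hcrossn q, dot3_smul_right, hdn q v, mul_zero]
  -- first key identity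
  have eq1 : ∀ q, Real.exp (-(2 * lam q)) •
      (crossProduct (Φ₁ q) (II22 q) - crossProduct (Φ₂ q) (II12 q))
        = fderiv ℝ n q ((0:ℝ),(1:ℝ)) := by
    intro q
    rw [hII22 q, hII12 q, map_smul, map_smul, hcross₁ q, hcross₂ q,
      hd₂ q (0,1), hd₁ q (0,1), Real.exp_neg]
    conv_rhs => rw [hdec q ((0:ℝ),(1:ℝ))]
    funext i
    simp only [Pi.smul_apply, Pi.sub_apply, Pi.add_apply, Pi.neg_apply, smul_eq_mul,
      dot3_comm (fderiv ℝ n q ((0:ℝ),(1:ℝ)))]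
    ring
  -- second key identity
  have eq2 : ∀ q, Real.exp (-(2 * lam q)) •
      (- crossProduct (Φ₁ q) (II12 q) + crossProduct (Φ₂ q) (II11 q))
        = -(fderiv ℝ n q ((1:ℝ),(0:ℝ))) := by
    intro q
    rw [hII12 q, hII11 q, map_smul, map_smul, hcross₁ q, hcross₂ q, hmix q,
      hd₂ q (1,0), hd₁ q (1,0), Real.exp_neg]
    conv_rhs => rw [hdec q ((1:ℝ),(0:ℝ))]
    funext i
    simp only [Pi.smul_apply, Pi.sub_apply, Pi.add_apply, Pi.neg_apply, smul_eq_mul,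
      dot3_comm (fderiv ℝ n q ((1:ℝ),(0:ℝ)))]
    ring
  -- conclusion
  intro p
  rw [show (fun q => Real.exp (-(2 * lam q)) •
        (crossProduct (Φ₁ q) (II22 q) - crossProduct (Φ₂ q) (II12 q)))
      = fun q => fderiv ℝ n q ((0:ℝ),(1:ℝ)) from funext eq1,
    show (fun q => Real.exp (-(2 * lam q)) •
        (- crossProduct (Φ₁ q) (II12 q) + crossProduct (Φ₂ q) (II11 q)))
      = fun q => -(fderiv ℝ n q ((1:ℝ),(0:ℝ))) from funext eq2]
  have hneg : fderiv ℝ (fun q => -(fderiv ℝ n q ((1:ℝ),(0:ℝ)))) p ((0:ℝ),(1:ℝ))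
      = -(fderiv ℝ (fun q => fderiv ℝ n q ((1:ℝ),(0:ℝ))) p ((0:ℝ),(1:ℝ))) := by
    rw [fderiv_fun_neg]; simp
  rw [hneg, mixed_symm hn p (1,0) (0,1)]
  simp
end
end

section
/- Let (Φ, e) be a pair where Φ is a weak conformal immersion of the torus T² into ℝᵐ with second fundamental form Î, and e = (e₁, e₂) a moving frame. Then the frame energy decomposes as F(Φ,e) = F_T(Φ,e) + W(Φ), i.e. (1/4)∫|de|²_g dvol_g = (1/2)∫|e₁·de₂|²_g dvol_g + (1/4)∫|Î|²_g dvol_g, and moreover (1/4)∫|Î|² dvol_g = ∫|H|² dvol_g on a torus (by Gauss–Bonnet, since the Euler characteristic vanishes). -/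
set_option linter.unusedSectionVars false
set_option maxHeartbeats 1000000


open Real MeasureTheory

noncomputable section

/-- Euclidean scalar product on ℝᵐ. -/
def dotm {m : ℕ} (u v : Fin m → ℝ) : ℝ := ∑ i, u i * v i

/-- The two coordinate directions of ℝ². -/
def dir : Fin 2 → ℝ × ℝ := ![((1:ℝ), (0:ℝ)), ((0:ℝ), (1:ℝ))]

namespace Aux
variable {m : ℕ}

lemma dotm_comm (u v : Fin m → ℝ) : dotm u v = dotm v u := by simp [dotm, mul_comm]
lemma dotm_add_left (u v w : Fin m → ℝ) : dotm (u + v) w = dotm u w + dotm v w := by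
  simp [dotm, add_mul, Finset.sum_add_distrib]
lemma dotm_sub_left (u v w : Fin m → ℝ) : dotm (u - v) w = dotm u w - dotm v w := by
  simp [dotm, sub_mul, Finset.sum_sub_distrib]
lemma dotm_smul_left (a : ℝ) (u w : Fin m → ℝ) : dotm (a • u) w = a * dotm u w := by
  simp [dotm, Finset.mul_sum, mul_assoc]
lemma dotm_add_right (u v w : Fin m → ℝ) : dotm w (u + v) = dotm w u + dotm w v := by
  rw [dotm_comm, dotm_add_left, dotm_comm u w, dotm_comm v w]
lemma dotm_sub_right (u v w : Fin m → ℝ) : dotm w (u - v) = dotm w u - dotm w v := by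
  rw [dotm_comm, dotm_sub_left, dotm_comm u w, dotm_comm v w]
lemma dotm_smul_right (a : ℝ) (u w : Fin m → ℝ) : dotm w (a • u) = a * dotm w u := by
  rw [dotm_comm, dotm_smul_left, dotm_comm]

lemma diff_comp {f : ℝ × ℝ → Fin m → ℝ} {p : ℝ × ℝ} (hf : DifferentiableAt ℝ f p) (i : Fin m) :
    DifferentiableAt ℝ (fun q => f q i) p :=
  ((ContinuousLinearMap.proj i : (Fin m → ℝ) →L[ℝ] ℝ).differentiableAt).comp p hf

lemma fderiv_comp_apply {f : ℝ × ℝ → Fin m → ℝ} {p : ℝ × ℝ} (hf : DifferentiableAt ℝ f p)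
    (i : Fin m) (v : ℝ × ℝ) :
    fderiv ℝ (fun q => f q i) p v = fderiv ℝ f p v i := by
  have h := fderiv_comp (𝕜 := ℝ) p
    ((ContinuousLinearMap.proj i : (Fin m → ℝ) →L[ℝ] ℝ).differentiableAt) hf
  have h2 : (fun q => f q i) = (ContinuousLinearMap.proj i : (Fin m → ℝ) →L[ℝ] ℝ) ∘ f := rfl
  rw [h2, h, ContinuousLinearMap.fderiv]
  rfl

lemma diffAt_dotm {f g : ℝ × ℝ → Fin m → ℝ} {p : ℝ × ℝ}
    (hf : DifferentiableAt ℝ f p) (hg : DifferentiableAt ℝ g p) :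
    DifferentiableAt ℝ (fun q => dotm (f q) (g q)) p := by
  have h : (fun q => dotm (f q) (g q)) = fun q => ∑ i, f q i * g q i := rfl
  rw [h]
  exact DifferentiableAt.fun_sum fun i _ => (diff_comp hf i).fun_mul (diff_comp hg i)

lemma fderiv_dotm {f g : ℝ × ℝ → Fin m → ℝ} {p : ℝ × ℝ}
    (hf : DifferentiableAt ℝ f p) (hg : DifferentiableAt ℝ g p) (v : ℝ × ℝ) :
    fderiv ℝ (fun q => dotm (f q) (g q)) p v
      = dotm (fderiv ℝ f p v) (g p) + dotm (f p) (fderiv ℝ g p v) := by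
  have h0 : (fun q => dotm (f q) (g q)) = fun q => ∑ i, f q i * g q i := rfl
  rw [h0, fderiv_fun_sum (fun i _ => (diff_comp hf i).fun_mul (diff_comp hg i))]
  rw [ContinuousLinearMap.sum_apply]
  have h1 : ∀ i : Fin m, (fderiv ℝ (fun q => f q i * g q i) p) v
      = fderiv ℝ f p v i * g p i + f p i * fderiv ℝ g p v i := by
    intro i
    rw [fderiv_fun_mul (diff_comp hf i) (diff_comp hg i)]
    simp [fderiv_comp_apply hf i v, fderiv_comp_apply hg i v]; ring
  simp only [h1, dotm, Finset.sum_add_distrib]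

lemma symm2 {F : Type*} [NormedAddCommGroup F] [NormedSpace ℝ F]
    {f : ℝ × ℝ → F} (hf : ContDiff ℝ (⊤ : ℕ∞) f) (p u w : ℝ × ℝ) :
    fderiv ℝ (fun q => fderiv ℝ f q u) p w = fderiv ℝ (fun q => fderiv ℝ f q w) p u := by
  have hd : Differentiable ℝ f := hf.differentiable (by simp)
  have hd' : Differentiable ℝ (fderiv ℝ f) := (hf.fderiv_right (m := (⊤ : ℕ∞)) (mod_cast le_top)).differentiable (by simp)
  have hsym := second_derivative_symmetric (f := f) (f' := fderiv ℝ f)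
    (f'' := fderiv ℝ (fderiv ℝ f) p) (fun y => (hd y).hasFDerivAt) ((hd' p).hasFDerivAt)
  have key : ∀ v : ℝ × ℝ, fderiv ℝ (fun q => fderiv ℝ f q v) p
      = (fderiv ℝ (fderiv ℝ f) p).flip v := by
    intro v
    have := fderiv_clm_apply (c := fderiv ℝ f) (u := fun _ => v) (hd' p)
      (differentiableAt_const v)
    simpa using this
  rw [key u, key w]
  simp only [ContinuousLinearMap.flip_apply]
  exact (hsym w u)

lemma contDiff_fderiv_apply {F : Type*} [NormedAddCommGroup F] [NormedSpace ℝ F]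
    {f : ℝ × ℝ → F} (hf : ContDiff ℝ (⊤ : ℕ∞) f) (v : ℝ × ℝ) :
    ContDiff ℝ (⊤ : ℕ∞) (fun q => fderiv ℝ f q v) :=
  (hf.fderiv_right (mod_cast le_top)).clm_apply contDiff_const

lemma fderiv_exp2lam {lam : ℝ × ℝ → ℝ} (hlam : ContDiff ℝ (⊤ : ℕ∞) lam) (q v : ℝ × ℝ) :
    fderiv ℝ (fun r => Real.exp (2 * lam r)) q v
      = Real.exp (2 * lam q) * (2 * fderiv ℝ lam q v) := by
  have h1 : HasFDerivAt (fun r => 2 * lam r) ((2:ℝ) • fderiv ℝ lam q) q :=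
    ((hlam.differentiable (by simp)) q).hasFDerivAt.const_mul 2
  have h2 := (Real.hasDerivAt_exp (2 * lam q)).comp_hasFDerivAt q h1
  have h3 : HasFDerivAt (fun r => Real.exp (2 * lam r))
      (Real.exp (2 * lam q) • (2:ℝ) • fderiv ℝ lam q) q := h2
  rw [h3.fderiv]
  simp [smul_eq_mul, mul_comm]
end Aux
section Geom
variable {m : ℕ} {Φ Φ₁ Φ₂ : ℝ × ℝ → Fin m → ℝ} {lam : ℝ × ℝ → ℝ}
variable (hΦ : ContDiff ℝ (⊤ : ℕ∞) Φ) (hlam : ContDiff ℝ (⊤ : ℕ∞) lam)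
variable (hΦ₁ : ∀ p, Φ₁ p = fderiv ℝ Φ p (1,0)) (hΦ₂ : ∀ p, Φ₂ p = fderiv ℝ Φ p (0,1))
variable (hconf₀ : ∀ p, dotm (Φ₁ p) (Φ₂ p) = 0)
variable (hconf₁ : ∀ p, dotm (Φ₁ p) (Φ₁ p) = Real.exp (2 * lam p))
variable (hconf₂ : ∀ p, dotm (Φ₂ p) (Φ₂ p) = Real.exp (2 * lam p))

namespace Aux

lemma dir0 : dir 0 = ((1:ℝ), (0:ℝ)) := rfl
lemma dir1 : dir 1 = ((0:ℝ), (1:ℝ)) := rfl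

include hΦ hΦ₁ in
lemma hΦ₁c : ContDiff ℝ (⊤ : ℕ∞) Φ₁ := by
  rw [funext hΦ₁]; exact contDiff_fderiv_apply hΦ (1,0)

include hΦ hΦ₂ in
lemma hΦ₂c : ContDiff ℝ (⊤ : ℕ∞) Φ₂ := by
  rw [funext hΦ₂]; exact contDiff_fderiv_apply hΦ (0,1)

include hΦ hΦ₁ hΦ₂ in
lemma symmΦ : ∀ q, fderiv ℝ Φ₂ q (1,0) = fderiv ℝ Φ₁ q (0,1) := by
  intro q
  rw [funext hΦ₁, funext hΦ₂]
  exact symm2 hΦ q _ _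

-- first derivative of conformality relations
include hΦ hlam hΦ₁ hΦ₂ hconf₁ in
lemma R1 : ∀ q v, dotm (fderiv ℝ Φ₁ q v) (Φ₁ q)
    = (fderiv ℝ lam q v) * Real.exp (2 * lam q) := by
  intro q v
  have hd : DifferentiableAt ℝ Φ₁ q := ((hΦ₁c hΦ hΦ₁).differentiable (by simp)) q
  have h1 : (fun r => dotm (Φ₁ r) (Φ₁ r)) = fun r => Real.exp (2 * lam r) := funext hconf₁
  have h2 := fderiv_dotm hd hd v
  rw [h1] at h2
  rw [fderiv_exp2lam hlam q v] at h2
  rw [dotm_comm (Φ₁ q)] at h2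
  linarith [h2]

include hΦ hlam hΦ₁ hΦ₂ hconf₂ in
lemma R2 : ∀ q v, dotm (fderiv ℝ Φ₂ q v) (Φ₂ q)
    = (fderiv ℝ lam q v) * Real.exp (2 * lam q) := by
  intro q v
  have hd : DifferentiableAt ℝ Φ₂ q := ((hΦ₂c hΦ hΦ₂).differentiable (by simp)) q
  have h1 : (fun r => dotm (Φ₂ r) (Φ₂ r)) = fun r => Real.exp (2 * lam r) := funext hconf₂
  have h2 := fderiv_dotm hd hd v
  rw [h1] at h2
  rw [fderiv_exp2lam hlam q v] at h2
  rw [dotm_comm (Φ₂ q)] at h2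
  linarith [h2]

include hΦ hΦ₁ hΦ₂ hconf₀ in
lemma R3 : ∀ q v, dotm (fderiv ℝ Φ₁ q v) (Φ₂ q) + dotm (Φ₁ q) (fderiv ℝ Φ₂ q v) = 0 := by
  intro q v
  have hd1 : DifferentiableAt ℝ Φ₁ q := ((hΦ₁c hΦ hΦ₁).differentiable (by simp)) q
  have hd2 : DifferentiableAt ℝ Φ₂ q := ((hΦ₂c hΦ hΦ₂).differentiable (by simp)) q
  have h1 : (fun r => dotm (Φ₁ r) (Φ₂ r)) = fun _ => (0:ℝ) := funext hconf₀
  have h2 := fderiv_dotm hd1 hd2 v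
  rw [h1, fderiv_fun_const] at h2
  simpa using h2.symm

end Aux
end Geom
namespace Aux

lemma fderiv_mul_apply {f g : ℝ × ℝ → ℝ} {p : ℝ × ℝ}
    (hf : DifferentiableAt ℝ f p) (hg : DifferentiableAt ℝ g p) (v : ℝ × ℝ) :
    fderiv ℝ (fun q => f q * g q) p v = fderiv ℝ f p v * g p + f p * fderiv ℝ g p v := by
  rw [fderiv_fun_mul hf hg]
  simp [smul_eq_mul]
  ring

lemma diff_exp2lam {lam : ℝ × ℝ → ℝ} (hlam : ContDiff ℝ (⊤ : ℕ∞) lam) :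
    Differentiable ℝ (fun q => Real.exp (2 * lam q)) :=
  fun q => (((hlam.differentiable (by simp)) q).const_mul 2).exp

end Aux

section Geom2
variable {m : ℕ} {Φ Φ₁ Φ₂ : ℝ × ℝ → Fin m → ℝ} {lam : ℝ × ℝ → ℝ}
variable (hΦ : ContDiff ℝ (⊤ : ℕ∞) Φ) (hlam : ContDiff ℝ (⊤ : ℕ∞) lam)
variable (hΦ₁ : ∀ p, Φ₁ p = fderiv ℝ Φ p (1,0)) (hΦ₂ : ∀ p, Φ₂ p = fderiv ℝ Φ p (0,1))
variable (hconf₀ : ∀ p, dotm (Φ₁ p) (Φ₂ p) = 0)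
variable (hconf₁ : ∀ p, dotm (Φ₁ p) (Φ₁ p) = Real.exp (2 * lam p))
variable (hconf₂ : ∀ p, dotm (Φ₂ p) (Φ₂ p) = Real.exp (2 * lam p))

namespace Aux

include hΦ hlam hΦ₁ hΦ₂ hconf₀ hconf₁ hconf₂ in
lemma gauss_key (p : ℝ × ℝ) :
    dotm (fderiv ℝ Φ₁ p (1,0)) (fderiv ℝ Φ₂ p (0,1))
      - dotm (fderiv ℝ Φ₁ p (0,1)) (fderiv ℝ Φ₁ p (0,1))
    = -(Real.exp (2 * lam p)) *
        ((fderiv ℝ (fun r => fderiv ℝ lam r (1,0)) p (1,0)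
          + 2 * (fderiv ℝ lam p (1,0))^2)
        + (fderiv ℝ (fun r => fderiv ℝ lam r (0,1)) p (0,1)
          + 2 * (fderiv ℝ lam p (0,1))^2)) := by
  have hΦ₁c' : ContDiff ℝ (⊤ : ℕ∞) Φ₁ := hΦ₁c hΦ hΦ₁
  have hΦ₂c' : ContDiff ℝ (⊤ : ℕ∞) Φ₂ := hΦ₂c hΦ hΦ₂
  have hΦ₁d : Differentiable ℝ Φ₁ := hΦ₁c'.differentiable (by simp)
  have hΦ₂d : Differentiable ℝ Φ₂ := hΦ₂c'.differentiable (by simp)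
  have hlamd : Differentiable ℝ lam := hlam.differentiable (by simp)
  have hl1d : Differentiable ℝ (fun q => fderiv ℝ lam q (1,0)) :=
    (contDiff_fderiv_apply hlam (1,0)).differentiable (by simp)
  have hl2d : Differentiable ℝ (fun q => fderiv ℝ lam q (0,1)) :=
    (contDiff_fderiv_apply hlam (0,1)).differentiable (by simp)
  have hEd : Differentiable ℝ (fun q => Real.exp (2 * lam q)) := diff_exp2lam hlam
  have hD11d : Differentiable ℝ (fun q => fderiv ℝ Φ₁ q (1,0)) :=
    (contDiff_fderiv_apply hΦ₁c' (1,0)).differentiable (by simp)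
  have hD12d : Differentiable ℝ (fun q => fderiv ℝ Φ₁ q (0,1)) :=
    (contDiff_fderiv_apply hΦ₁c' (0,1)).differentiable (by simp)
  -- function identities
  have F1 : ∀ q, dotm (fderiv ℝ Φ₁ q (0,1)) (Φ₂ q)
      = (fderiv ℝ lam q (1,0)) * Real.exp (2 * lam q) := by
    intro q
    rw [← symmΦ hΦ hΦ₁ hΦ₂ q]
    exact R2 hΦ hlam hΦ₁ hΦ₂ hconf₂ q (1,0)
  have F2 : ∀ q, dotm (fderiv ℝ Φ₁ q (1,0)) (Φ₂ q)
      = -((fderiv ℝ lam q (0,1)) * Real.exp (2 * lam q)) := by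
    intro q
    have h3 := R3 hΦ hΦ₁ hΦ₂ hconf₀ q (1,0)
    have h2 : dotm (Φ₁ q) (fderiv ℝ Φ₂ q (1,0))
        = (fderiv ℝ lam q (0,1)) * Real.exp (2 * lam q) := by
      rw [dotm_comm, symmΦ hΦ hΦ₁ hΦ₂ q]
      exact R1 hΦ hlam hΦ₁ hΦ₂ hconf₁ q (0,1)
    linarith [h3, h2]
  -- differentiate F1 in direction (1,0)
  have dF1 : dotm (fderiv ℝ (fun q => fderiv ℝ Φ₁ q (0,1)) p (1,0)) (Φ₂ p)
        + dotm (fderiv ℝ Φ₁ p (0,1)) (fderiv ℝ Φ₂ p (1,0))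
      = fderiv ℝ (fun q => fderiv ℝ lam q (1,0)) p (1,0) * Real.exp (2 * lam p)
        + fderiv ℝ lam p (1,0) * (Real.exp (2 * lam p) * (2 * fderiv ℝ lam p (1,0))) := by
    have hL := fderiv_dotm (hD12d p) (hΦ₂d p) ((1:ℝ),(0:ℝ))
    have hfun : (fun q => dotm (fderiv ℝ Φ₁ q (0,1)) (Φ₂ q))
        = fun q => (fderiv ℝ lam q (1,0)) * Real.exp (2 * lam q) := funext F1
    rw [hfun] at hL
    rw [fderiv_mul_apply (hl1d p) (hEd p) ((1:ℝ),(0:ℝ))] at hL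
    rw [fderiv_exp2lam hlam p ((1:ℝ),(0:ℝ))] at hL
    linarith [hL]
  -- differentiate F2 in direction (0,1)
  have dF2 : dotm (fderiv ℝ (fun q => fderiv ℝ Φ₁ q (1,0)) p (0,1)) (Φ₂ p)
        + dotm (fderiv ℝ Φ₁ p (1,0)) (fderiv ℝ Φ₂ p (0,1))
      = -(fderiv ℝ (fun q => fderiv ℝ lam q (0,1)) p (0,1) * Real.exp (2 * lam p)
        + fderiv ℝ lam p (0,1) * (Real.exp (2 * lam p) * (2 * fderiv ℝ lam p (0,1)))) := by
    have hL := fderiv_dotm (hD11d p) (hΦ₂d p) ((0:ℝ),(1:ℝ))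
    have hfun : (fun q => dotm (fderiv ℝ Φ₁ q (1,0)) (Φ₂ q))
        = fun q => -((fderiv ℝ lam q (0,1)) * Real.exp (2 * lam q)) := funext F2
    rw [hfun] at hL
    have hmd : DifferentiableAt ℝ (fun q => (fderiv ℝ lam q (0,1)) * Real.exp (2 * lam q)) p :=
      (hl2d p).mul (hEd p)
    rw [fderiv_fun_neg, ContinuousLinearMap.neg_apply] at hL
    rw [fderiv_mul_apply (hl2d p) (hEd p) ((0:ℝ),(1:ℝ))] at hL
    rw [fderiv_exp2lam hlam p ((0:ℝ),(1:ℝ))] at hL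
    linarith [hL]
  -- symmetry of the mixed third derivative
  have hsym3 : fderiv ℝ (fun q => fderiv ℝ Φ₁ q (1,0)) p (0,1)
      = fderiv ℝ (fun q => fderiv ℝ Φ₁ q (0,1)) p (1,0) := symm2 hΦ₁c' p _ _
  have hsymval : fderiv ℝ Φ₂ p (1,0) = fderiv ℝ Φ₁ p (0,1) := symmΦ hΦ hΦ₁ hΦ₂ p
  rw [hsym3] at dF2
  rw [hsymval] at dF1
  linarith [dF1, dF2]


include hΦ hlam hΦ₁ hΦ₂ hconf₀ hconf₁ hconf₂ in
lemma gauss_II (II : ℝ × ℝ → Fin 2 → Fin 2 → Fin m → ℝ)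
    (hII : ∀ p i j, II p i j =
      fderiv ℝ (fun q => fderiv ℝ Φ q (dir i)) p (dir j)
        - (Real.exp (-(2 * lam p)) *
            dotm (fderiv ℝ (fun q => fderiv ℝ Φ q (dir i)) p (dir j)) (Φ₁ p)) • Φ₁ p
        - (Real.exp (-(2 * lam p)) *
            dotm (fderiv ℝ (fun q => fderiv ℝ Φ q (dir i)) p (dir j)) (Φ₂ p)) • Φ₂ p)
    (p : ℝ × ℝ) :
    dotm (II p 0 0) (II p 1 1) - dotm (II p 0 1) (II p 0 1)
      = -(Real.exp (2 * lam p)) *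
          (fderiv ℝ (fun r => fderiv ℝ lam r (1,0)) p (1,0)
            + fderiv ℝ (fun r => fderiv ℝ lam r (0,1)) p (0,1)) := by
  have hfun1 : (fun q => fderiv ℝ Φ q (dir 0)) = Φ₁ := by
    funext q; rw [dir0, ← hΦ₁ q]
  have hfun2 : (fun q => fderiv ℝ Φ q (dir 1)) = Φ₂ := by
    funext q; rw [dir1, ← hΦ₂ q]
  have h00 : II p 0 0 = fderiv ℝ Φ₁ p (1,0)
      - (Real.exp (-(2 * lam p)) * dotm (fderiv ℝ Φ₁ p (1,0)) (Φ₁ p)) • Φ₁ p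
      - (Real.exp (-(2 * lam p)) * dotm (fderiv ℝ Φ₁ p (1,0)) (Φ₂ p)) • Φ₂ p := by
    rw [hII p 0 0, hfun1, dir0]
  have h01 : II p 0 1 = fderiv ℝ Φ₁ p (0,1)
      - (Real.exp (-(2 * lam p)) * dotm (fderiv ℝ Φ₁ p (0,1)) (Φ₁ p)) • Φ₁ p
      - (Real.exp (-(2 * lam p)) * dotm (fderiv ℝ Φ₁ p (0,1)) (Φ₂ p)) • Φ₂ p := by
    rw [hII p 0 1, hfun1, dir1]
  have h11 : II p 1 1 = fderiv ℝ Φ₂ p (0,1)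
      - (Real.exp (-(2 * lam p)) * dotm (fderiv ℝ Φ₂ p (0,1)) (Φ₁ p)) • Φ₁ p
      - (Real.exp (-(2 * lam p)) * dotm (fderiv ℝ Φ₂ p (0,1)) (Φ₂ p)) • Φ₂ p := by
    rw [hII p 1 1, hfun2, dir1]
  set A : Fin m → ℝ := fderiv ℝ Φ₁ p (1,0) with hA
  set B : Fin m → ℝ := fderiv ℝ Φ₁ p (0,1) with hB
  set C : Fin m → ℝ := fderiv ℝ Φ₂ p (0,1) with hC
  set l1 : ℝ := fderiv ℝ lam p (1,0) with hl1
  set l2 : ℝ := fderiv ℝ lam p (0,1) with hl2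
  set E : ℝ := Real.exp (2 * lam p) with hE
  set s : ℝ := Real.exp (-(2 * lam p)) with hs
  have hsE : s * E = 1 := by
    rw [hs, hE, ← Real.exp_add]; simp
  -- dot product values
  have hA1 : dotm A (Φ₁ p) = l1 * E := R1 hΦ hlam hΦ₁ hΦ₂ hconf₁ p (1,0)
  have hB1 : dotm B (Φ₁ p) = l2 * E := R1 hΦ hlam hΦ₁ hΦ₂ hconf₁ p (0,1)
  have hB2 : dotm B (Φ₂ p) = l1 * E := by
    rw [hB, ← symmΦ hΦ hΦ₁ hΦ₂ p]
    exact R2 hΦ hlam hΦ₁ hΦ₂ hconf₂ p (1,0)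
  have hC2 : dotm C (Φ₂ p) = l2 * E := R2 hΦ hlam hΦ₁ hΦ₂ hconf₂ p (0,1)
  have hA2 : dotm A (Φ₂ p) = -(l2 * E) := by
    have h3 := R3 hΦ hΦ₁ hΦ₂ hconf₀ p (1,0)
    have h2 : dotm (Φ₁ p) (fderiv ℝ Φ₂ p (1,0)) = l2 * E := by
      rw [dotm_comm, symmΦ hΦ hΦ₁ hΦ₂ p]
      exact R1 hΦ hlam hΦ₁ hΦ₂ hconf₁ p (0,1)
    rw [hA]; linarith [h3, h2]
  have hC1 : dotm C (Φ₁ p) = -(l1 * E) := by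
    have h3 := R3 hΦ hΦ₁ hΦ₂ hconf₀ p (0,1)
    rw [hC, dotm_comm]
    have hB2' : dotm (fderiv ℝ Φ₁ p (0,1)) (Φ₂ p) = l1 * E := hB2
    linarith [h3, hB2']
  have hkey : dotm A C - dotm B B
      = -E * ((fderiv ℝ (fun r => fderiv ℝ lam r (1,0)) p (1,0) + 2 * l1^2)
          + (fderiv ℝ (fun r => fderiv ℝ lam r (0,1)) p (0,1) + 2 * l2^2)) :=
    gauss_key hΦ hlam hΦ₁ hΦ₂ hconf₀ hconf₁ hconf₂ p
  have h11' : dotm (Φ₁ p) (Φ₁ p) = E := hconf₁ p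
  have h22' : dotm (Φ₂ p) (Φ₂ p) = E := hconf₂ p
  have h12' : dotm (Φ₁ p) (Φ₂ p) = 0 := hconf₀ p
  have h21' : dotm (Φ₂ p) (Φ₁ p) = 0 := by rw [dotm_comm]; exact h12'
  have hA1' : dotm (Φ₁ p) A = l1 * E := by rw [dotm_comm]; exact hA1
  have hA2' : dotm (Φ₂ p) A = -(l2 * E) := by rw [dotm_comm]; exact hA2
  have hB1' : dotm (Φ₁ p) B = l2 * E := by rw [dotm_comm]; exact hB1
  have hB2' : dotm (Φ₂ p) B = l1 * E := by rw [dotm_comm]; exact hB2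
  have hC1' : dotm (Φ₁ p) C = -(l1 * E) := by rw [dotm_comm]; exact hC1
  have hC2' : dotm (Φ₂ p) C = l2 * E := by rw [dotm_comm]; exact hC2
  rw [h00, h01, h11]
  simp only [dotm_sub_left, dotm_sub_right, dotm_smul_left, dotm_smul_right]
  have hsval : s = E⁻¹ := by rw [hs, hE, Real.exp_neg]
  have hEne : E ≠ 0 := by rw [hE]; exact (Real.exp_pos _).ne'
  simp only [hA1, hA2, hB1, hB2, hC1, hC2, hA1', hA2', hB1', hB2', hC1', hC2',
    h11', h22', h12', h21', hsval]
  field_simp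
  linear_combination hkey


lemma cols (a1 b1 a2 b2 E s : ℝ) (hsE : s * E = 1)
    (r1 : a1^2*E + b1^2*E = 1) (r2 : a2^2*E + b2^2*E = 1)
    (r12 : a1*a2*E + b1*b2*E = 0) :
    a1^2 + a2^2 = s ∧ b1^2 + b2^2 = s ∧ a1*b1 + a2*b2 = 0 := by
  set D : ℝ := a1*b2 - a2*b1 with hD
  have ha1 : a1 = E*b2*D := by linear_combination (-a1) * r2 + a2 * r12
  have hb1 : b1 = -(E*a2*D) := by linear_combination (-b1) * r2 + b2 * r12
  have ha2 : a2 = -(E*b1*D) := by linear_combination (-a2) * r1 + a1 * r12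
  have hb2 : b2 = E*a1*D := by linear_combination (-b2) * r1 + b1 * r12
  have hD2 : E^2*D^2 = 1 := by
    linear_combination (-(E*a1))*ha1 + (-(E*b1))*hb1 + r1
  have hEX : E * (a1^2 + a2^2) = 1 := by
    linear_combination (E*a1)*ha1 + (E*a2)*ha2 + hD2
  have hEY : E * (b1^2 + b2^2) = 1 := by
    linear_combination (E*b1)*hb1 + (E*b2)*hb2 + hD2
  refine ⟨?_, ?_, ?_⟩
  · linear_combination s*hEX - (a1^2+a2^2)*hsE
  · linear_combination s*hEY - (b1^2+b2^2)*hsE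
  · linear_combination b1*ha1 + b2*ha2

include hΦ hlam hΦ₁ hΦ₂ hconf₀ hconf₁ hconf₂ in
lemma frame_point (e₁ e₂ : ℝ × ℝ → Fin m → ℝ)
    (he₁ : ContDiff ℝ (⊤ : ℕ∞) e₁) (he₂ : ContDiff ℝ (⊤ : ℕ∞) e₂)
    (hon : ∀ p, dotm (e₁ p) (e₁ p) = 1 ∧ dotm (e₂ p) (e₂ p) = 1 ∧ dotm (e₁ p) (e₂ p) = 0)
    (htan : ∀ p, ∃ a b c d : ℝ, e₁ p = a • Φ₁ p + b • Φ₂ p ∧ e₂ p = c • Φ₁ p + d • Φ₂ p)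
    (II : ℝ × ℝ → Fin 2 → Fin 2 → Fin m → ℝ)
    (hII : ∀ p i j, II p i j =
      fderiv ℝ (fun q => fderiv ℝ Φ q (dir i)) p (dir j)
        - (Real.exp (-(2 * lam p)) *
            dotm (fderiv ℝ (fun q => fderiv ℝ Φ q (dir i)) p (dir j)) (Φ₁ p)) • Φ₁ p
        - (Real.exp (-(2 * lam p)) *
            dotm (fderiv ℝ (fun q => fderiv ℝ Φ q (dir i)) p (dir j)) (Φ₂ p)) • Φ₂ p)
    (p : ℝ × ℝ) :
    dotm (fderiv ℝ e₁ p (1,0)) (fderiv ℝ e₁ p (1,0))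
      + dotm (fderiv ℝ e₁ p (0,1)) (fderiv ℝ e₁ p (0,1))
      + dotm (fderiv ℝ e₂ p (1,0)) (fderiv ℝ e₂ p (1,0))
      + dotm (fderiv ℝ e₂ p (0,1)) (fderiv ℝ e₂ p (0,1))
    = 2 * ((dotm (e₁ p) (fderiv ℝ e₂ p (1,0)))^2 + (dotm (e₁ p) (fderiv ℝ e₂ p (0,1)))^2)
      + Real.exp (-(2 * lam p)) * ∑ i, ∑ j, dotm (II p i j) (II p i j) := by
  have hΦ₁c' : ContDiff ℝ (⊤ : ℕ∞) Φ₁ := hΦ₁c hΦ hΦ₁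
  have hΦ₂c' : ContDiff ℝ (⊤ : ℕ∞) Φ₂ := hΦ₂c hΦ hΦ₂
  have hΦ₁d : Differentiable ℝ Φ₁ := hΦ₁c'.differentiable (by simp)
  have hΦ₂d : Differentiable ℝ Φ₂ := hΦ₂c'.differentiable (by simp)
  have he₁d : Differentiable ℝ e₁ := he₁.differentiable (by simp)
  have he₂d : Differentiable ℝ e₂ := he₂.differentiable (by simp)
  have hsd : Differentiable ℝ (fun q => Real.exp (-(2 * lam q))) := by
    have : (fun q => Real.exp (-(2 * lam q))) = fun q => Real.exp (2 * (-(lam q))) := by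
      funext q; ring_nf
    rw [this]
    exact diff_exp2lam (hlam.neg)
  -- coefficient functions
  set a1 : ℝ × ℝ → ℝ := fun q => Real.exp (-(2 * lam q)) * dotm (e₁ q) (Φ₁ q) with ha1
  set b1 : ℝ × ℝ → ℝ := fun q => Real.exp (-(2 * lam q)) * dotm (e₁ q) (Φ₂ q) with hb1
  set a2 : ℝ × ℝ → ℝ := fun q => Real.exp (-(2 * lam q)) * dotm (e₂ q) (Φ₁ q) with ha2
  set b2 : ℝ × ℝ → ℝ := fun q => Real.exp (-(2 * lam q)) * dotm (e₂ q) (Φ₂ q) with hb2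
  have hsEq : ∀ q, Real.exp (-(2 * lam q)) * Real.exp (2 * lam q) = 1 := by
    intro q; rw [← Real.exp_add]; simp
  have hrep : ∀ q, e₁ q = a1 q • Φ₁ q + b1 q • Φ₂ q ∧ e₂ q = a2 q • Φ₁ q + b2 q • Φ₂ q := by
    intro q
    obtain ⟨a, b, c, d, h1, h2⟩ := htan q
    have h21 : dotm (Φ₂ q) (Φ₁ q) = 0 := by rw [dotm_comm]; exact hconf₀ q
    have e1a : a1 q = a := by
      rw [ha1]
      show Real.exp (-(2 * lam q)) * dotm (e₁ q) (Φ₁ q) = a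
      rw [h1, dotm_add_left, dotm_smul_left, dotm_smul_left, hconf₁ q, h21]
      linear_combination a * hsEq q
    have e1b : b1 q = b := by
      rw [hb1]
      show Real.exp (-(2 * lam q)) * dotm (e₁ q) (Φ₂ q) = b
      rw [h1, dotm_add_left, dotm_smul_left, dotm_smul_left, hconf₂ q, hconf₀ q]
      linear_combination b * hsEq q
    have e2a : a2 q = c := by
      rw [ha2]
      show Real.exp (-(2 * lam q)) * dotm (e₂ q) (Φ₁ q) = c
      rw [h2, dotm_add_left, dotm_smul_left, dotm_smul_left, hconf₁ q, h21]
      linear_combination c * hsEq q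
    have e2b : b2 q = d := by
      rw [hb2]
      show Real.exp (-(2 * lam q)) * dotm (e₂ q) (Φ₂ q) = d
      rw [h2, dotm_add_left, dotm_smul_left, dotm_smul_left, hconf₂ q, hconf₀ q]
      linear_combination d * hsEq q
    rw [e1a, e1b, e2a, e2b]
    exact ⟨h1, h2⟩
  -- differentiability of coefficients
  have ha1d : Differentiable ℝ a1 := hsd.mul (fun q => diffAt_dotm (he₁d q) (hΦ₁d q))
  have hb1d : Differentiable ℝ b1 := hsd.mul (fun q => diffAt_dotm (he₁d q) (hΦ₂d q))
  have ha2d : Differentiable ℝ a2 := hsd.mul (fun q => diffAt_dotm (he₂d q) (hΦ₁d q))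
  have hb2d : Differentiable ℝ b2 := hsd.mul (fun q => diffAt_dotm (he₂d q) (hΦ₂d q))
  -- product rule
  have hprod : ∀ (e : ℝ × ℝ → Fin m → ℝ) (a b : ℝ × ℝ → ℝ),
      Differentiable ℝ a → Differentiable ℝ b →
      (∀ q, e q = a q • Φ₁ q + b q • Φ₂ q) → ∀ w,
      fderiv ℝ e p w = fderiv ℝ a p w • Φ₁ p + a p • fderiv ℝ Φ₁ p w
        + (fderiv ℝ b p w • Φ₂ p + b p • fderiv ℝ Φ₂ p w) := by
    intro e a b had hbd hrepe w
    have h1 : HasFDerivAt (fun q => a q • Φ₁ q)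
        (a p • fderiv ℝ Φ₁ p + (fderiv ℝ a p).smulRight (Φ₁ p)) p :=
      (had p).hasFDerivAt.smul (hΦ₁d p).hasFDerivAt
    have h2 : HasFDerivAt (fun q => b q • Φ₂ q)
        (b p • fderiv ℝ Φ₂ p + (fderiv ℝ b p).smulRight (Φ₂ p)) p :=
      (hbd p).hasFDerivAt.smul (hΦ₂d p).hasFDerivAt
    have h3 : HasFDerivAt e
        ((a p • fderiv ℝ Φ₁ p + (fderiv ℝ a p).smulRight (Φ₁ p))
          + (b p • fderiv ℝ Φ₂ p + (fderiv ℝ b p).smulRight (Φ₂ p))) p := by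
      rw [funext hrepe]; exact h1.add h2
    rw [h3.fderiv]
    simp only [ContinuousLinearMap.add_apply, ContinuousLinearMap.coe_smul',
      Pi.smul_apply, ContinuousLinearMap.smulRight_apply]
    module
  have hprod1 := hprod e₁ a1 b1 ha1d hb1d (fun q => (hrep q).1)
  have hprod2 := hprod e₂ a2 b2 ha2d hb2d (fun q => (hrep q).2)
  -- orthonormality derivative facts
  have hoderiv : ∀ (f g : ℝ × ℝ → Fin m → ℝ), Differentiable ℝ f → Differentiable ℝ g →
      (∀ q, dotm (f q) (g q) = dotm (f p) (g p)) → ∀ w,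
      dotm (fderiv ℝ f p w) (g p) + dotm (f p) (fderiv ℝ g p w) = 0 := by
    intro f g hfd hgd hconst w
    have h1 : (fun q => dotm (f q) (g q)) = fun _ => dotm (f p) (g p) := funext hconst
    have h2 := fderiv_dotm (hfd p) (hgd p) w
    rw [h1, fderiv_fun_const] at h2
    simpa using h2.symm
  have o1 : ∀ w, dotm (fderiv ℝ e₁ p w) (e₁ p) = 0 := by
    intro w
    have h := hoderiv e₁ e₁ he₁d he₁d (fun q => by rw [(hon q).1, (hon p).1]) w
    have hc : dotm (e₁ p) (fderiv ℝ e₁ p w) = dotm (fderiv ℝ e₁ p w) (e₁ p) := dotm_comm _ _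
    linarith [h, hc]
  have o2 : ∀ w, dotm (fderiv ℝ e₂ p w) (e₂ p) = 0 := by
    intro w
    have h := hoderiv e₂ e₂ he₂d he₂d (fun q => by rw [(hon q).2.1, (hon p).2.1]) w
    have hc : dotm (e₂ p) (fderiv ℝ e₂ p w) = dotm (fderiv ℝ e₂ p w) (e₂ p) := dotm_comm _ _
    linarith [h, hc]
  have o3 : ∀ w, dotm (fderiv ℝ e₁ p w) (e₂ p) = - dotm (e₁ p) (fderiv ℝ e₂ p w) := by
    intro w
    have := hoderiv e₁ e₂ he₁d he₂d (fun q => by rw [(hon q).2.2, (hon p).2.2]) w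
    linarith [this]
  -- the normal projection at p
  set s : ℝ := Real.exp (-(2 * lam p)) with hs
  set E : ℝ := Real.exp (2 * lam p) with hE
  have hsE : s * E = 1 := hsEq p
  set prj : (Fin m → ℝ) → (Fin m → ℝ) := fun v =>
    v - (s * dotm v (Φ₁ p)) • Φ₁ p - (s * dotm v (Φ₂ p)) • Φ₂ p with hprj
  have h12 : dotm (Φ₁ p) (Φ₂ p) = 0 := hconf₀ p
  have h21 : dotm (Φ₂ p) (Φ₁ p) = 0 := by rw [dotm_comm]; exact h12
  have h11 : dotm (Φ₁ p) (Φ₁ p) = E := hconf₁ p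
  have h22 : dotm (Φ₂ p) (Φ₂ p) = E := hconf₂ p
  -- squared norm of the projection
  have S1 : ∀ v, dotm (prj v) (prj v)
      = dotm v v - s * (dotm v (Φ₁ p))^2 - s * (dotm v (Φ₂ p))^2 := by
    intro v
    rw [hprj]
    simp only [dotm_sub_left, dotm_sub_right, dotm_smul_left, dotm_smul_right,
      h11, h22, h12, h21]
    have hcv1 : dotm (Φ₁ p) v = dotm v (Φ₁ p) := dotm_comm _ _
    have hcv2 : dotm (Φ₂ p) v = dotm v (Φ₂ p) := dotm_comm _ _
    rw [hcv1, hcv2]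
    linear_combination (s * (dotm v (Φ₁ p))^2 + s * (dotm v (Φ₂ p))^2) * hsE
  -- row relations and column relations at p
  have hrow : (a1 p)^2*E + (b1 p)^2*E = 1 ∧ (a2 p)^2*E + (b2 p)^2*E = 1
      ∧ (a1 p)*(a2 p)*E + (b1 p)*(b2 p)*E = 0 := by
    have h1 := (hon p).1
    have h2 := (hon p).2.1
    have h3 := (hon p).2.2
    rw [(hrep p).1] at h1 h3
    rw [(hrep p).2] at h2 h3
    simp only [dotm_add_left, dotm_add_right, dotm_smul_left, dotm_smul_right,
      h11, h22, h12, h21] at h1 h2 h3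
    refine ⟨by linarith [h1], by linarith [h2], by linarith [h3]⟩
  obtain ⟨colA, colB, colAB⟩ := cols (a1 p) (b1 p) (a2 p) (b2 p) E s hsE
    hrow.1 hrow.2.1 hrow.2.2
  -- tangential part in terms of the frame
  have S2 : ∀ v, (dotm v (e₁ p))^2 + (dotm v (e₂ p))^2
      = s * ((dotm v (Φ₁ p))^2 + (dotm v (Φ₂ p))^2) := by
    intro v
    rw [(hrep p).1, (hrep p).2]
    simp only [dotm_add_right, dotm_smul_right]
    linear_combination (dotm v (Φ₁ p))^2 * colA + (dotm v (Φ₂ p))^2 * colB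
      + (2 * dotm v (Φ₁ p) * dotm v (Φ₂ p)) * colAB
  have S3 : ∀ v, dotm v v = (dotm v (e₁ p))^2 + (dotm v (e₂ p))^2 + dotm (prj v) (prj v) := by
    intro v
    have := S1 v
    have := S2 v
    linarith [S1 v, S2 v]
  -- projection of frame derivatives
  have hprjlin : ∀ (α β : ℝ) (u v : Fin m → ℝ),
      prj (α • u + β • v) = α • prj u + β • prj v := by
    intro α β u v
    rw [hprj]
    simp only [dotm_add_left, dotm_smul_left]
    funext i
    simp [Pi.smul_apply, smul_eq_mul]
    ring
  have hprjΦ₁ : prj (Φ₁ p) = 0 := by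
    rw [hprj]
    simp only [h11, h12]
    funext i
    simp [smul_eq_mul]
    linear_combination (-(Φ₁ p i)) * hsE
  have hprjΦ₂ : prj (Φ₂ p) = 0 := by
    rw [hprj]
    simp only [h21, h22]
    funext i
    simp [smul_eq_mul]
    linear_combination (-(Φ₂ p i)) * hsE
  have hfun1 : (fun q => fderiv ℝ Φ q (dir 0)) = Φ₁ := by
    funext q; rw [dir0, ← hΦ₁ q]
  have hfun2 : (fun q => fderiv ℝ Φ q (dir 1)) = Φ₂ := by
    funext q; rw [dir1, ← hΦ₂ q]
  have w00 : prj (fderiv ℝ Φ₁ p (1,0)) = II p 0 0 := by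
    rw [hII p 0 0, hfun1]
    simp only [dir0, dir1, hprj, hs]
  have w01 : prj (fderiv ℝ Φ₁ p (0,1)) = II p 0 1 := by
    rw [hII p 0 1, hfun1]
    simp only [dir0, dir1, hprj, hs]
  have w10 : prj (fderiv ℝ Φ₂ p (1,0)) = II p 1 0 := by
    rw [hII p 1 0, hfun2]
    simp only [dir0, dir1, hprj, hs]
  have w11 : prj (fderiv ℝ Φ₂ p (0,1)) = II p 1 1 := by
    rw [hII p 1 1, hfun2]
    simp only [dir0, dir1, hprj, hs]
  -- projection of frame derivative vectors
  have hprje : ∀ w, prj (fderiv ℝ e₁ p w) = a1 p • prj (fderiv ℝ Φ₁ p w) + b1 p • prj (fderiv ℝ Φ₂ p w)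
      ∧ prj (fderiv ℝ e₂ p w) = a2 p • prj (fderiv ℝ Φ₁ p w) + b2 p • prj (fderiv ℝ Φ₂ p w) := by
    intro w
    constructor
    · rw [hprod1 w]
      rw [show fderiv ℝ a1 p w • Φ₁ p + a1 p • fderiv ℝ Φ₁ p w
          + (fderiv ℝ b1 p w • Φ₂ p + b1 p • fderiv ℝ Φ₂ p w)
          = (fderiv ℝ a1 p w • Φ₁ p + fderiv ℝ b1 p w • Φ₂ p)
            + (a1 p • fderiv ℝ Φ₁ p w + b1 p • fderiv ℝ Φ₂ p w) from by module]
      rw [show (fderiv ℝ a1 p w • Φ₁ p + fderiv ℝ b1 p w • Φ₂ p)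
            + (a1 p • fderiv ℝ Φ₁ p w + b1 p • fderiv ℝ Φ₂ p w)
          = (1:ℝ) • (fderiv ℝ a1 p w • Φ₁ p + fderiv ℝ b1 p w • Φ₂ p)
            + (1:ℝ) • (a1 p • fderiv ℝ Φ₁ p w + b1 p • fderiv ℝ Φ₂ p w) from by module]
      rw [hprjlin, hprjlin, hprjlin]
      rw [hprjΦ₁, hprjΦ₂]
      module
    · rw [hprod2 w]
      rw [show fderiv ℝ a2 p w • Φ₁ p + a2 p • fderiv ℝ Φ₁ p w
          + (fderiv ℝ b2 p w • Φ₂ p + b2 p • fderiv ℝ Φ₂ p w)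
          = (1:ℝ) • (fderiv ℝ a2 p w • Φ₁ p + fderiv ℝ b2 p w • Φ₂ p)
            + (1:ℝ) • (a2 p • fderiv ℝ Φ₁ p w + b2 p • fderiv ℝ Φ₂ p w) from by module]
      rw [hprjlin, hprjlin, hprjlin]
      rw [hprjΦ₁, hprjΦ₂]
      module
  -- sum of squared norms of projections for each direction
  have hPsum : ∀ w, dotm (prj (fderiv ℝ e₁ p w)) (prj (fderiv ℝ e₁ p w))
      + dotm (prj (fderiv ℝ e₂ p w)) (prj (fderiv ℝ e₂ p w))
      = s * (dotm (prj (fderiv ℝ Φ₁ p w)) (prj (fderiv ℝ Φ₁ p w))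
          + dotm (prj (fderiv ℝ Φ₂ p w)) (prj (fderiv ℝ Φ₂ p w))) := by
    intro w
    rw [(hprje w).1, (hprje w).2]
    simp only [dotm_add_left, dotm_add_right, dotm_smul_left, dotm_smul_right]
    have hUV : dotm (prj (fderiv ℝ Φ₂ p w)) (prj (fderiv ℝ Φ₁ p w))
        = dotm (prj (fderiv ℝ Φ₁ p w)) (prj (fderiv ℝ Φ₂ p w)) := dotm_comm _ _
    rw [hUV]
    linear_combination dotm (prj (fderiv ℝ Φ₁ p w)) (prj (fderiv ℝ Φ₁ p w)) * colA
      + dotm (prj (fderiv ℝ Φ₂ p w)) (prj (fderiv ℝ Φ₂ p w)) * colB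
      + (2 * dotm (prj (fderiv ℝ Φ₁ p w)) (prj (fderiv ℝ Φ₂ p w))) * colAB
  -- assemble
  have main : ∀ w, dotm (fderiv ℝ e₁ p w) (fderiv ℝ e₁ p w)
      + dotm (fderiv ℝ e₂ p w) (fderiv ℝ e₂ p w)
      = 2 * (dotm (e₁ p) (fderiv ℝ e₂ p w))^2
        + s * (dotm (prj (fderiv ℝ Φ₁ p w)) (prj (fderiv ℝ Φ₁ p w))
            + dotm (prj (fderiv ℝ Φ₂ p w)) (prj (fderiv ℝ Φ₂ p w))) := by
    intro w
    have h1 := S3 (fderiv ℝ e₁ p w)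
    have h2 := S3 (fderiv ℝ e₂ p w)
    have c11 : dotm (fderiv ℝ e₁ p w) (e₁ p) = 0 := o1 w
    have c22 : dotm (fderiv ℝ e₂ p w) (e₂ p) = 0 := o2 w
    have c12 : dotm (fderiv ℝ e₁ p w) (e₂ p) = - dotm (e₁ p) (fderiv ℝ e₂ p w) := o3 w
    have c21 : dotm (fderiv ℝ e₂ p w) (e₁ p) = dotm (e₁ p) (fderiv ℝ e₂ p w) := dotm_comm _ _
    simp only [c11, c22, c12, c21] at h1 h2
    have hp := hPsum w
    linear_combination h1 + h2 + hp
  have m1 := main ((1:ℝ), (0:ℝ))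
  have m2 := main ((0:ℝ), (1:ℝ))
  -- identify the projections with II
  rw [w00, w10] at m1
  rw [w01, w11] at m2
  rw [Fin.sum_univ_two]
  rw [Fin.sum_univ_two, Fin.sum_univ_two]
  linear_combination m1 + m2


include hΦ hlam hΦ₁ hΦ₂ hconf₀ hconf₁ hconf₂ in
lemma willmore_point (II : ℝ × ℝ → Fin 2 → Fin 2 → Fin m → ℝ)
    (hII : ∀ p i j, II p i j =
      fderiv ℝ (fun q => fderiv ℝ Φ q (dir i)) p (dir j)
        - (Real.exp (-(2 * lam p)) *
            dotm (fderiv ℝ (fun q => fderiv ℝ Φ q (dir i)) p (dir j)) (Φ₁ p)) • Φ₁ p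
        - (Real.exp (-(2 * lam p)) *
            dotm (fderiv ℝ (fun q => fderiv ℝ Φ q (dir i)) p (dir j)) (Φ₂ p)) • Φ₂ p)
    (H : ℝ × ℝ → Fin m → ℝ)
    (hH : ∀ p, H p = ((1/2) * Real.exp (-(2 * lam p))) • (II p 0 0 + II p 1 1))
    (p : ℝ × ℝ) :
    (1/4) * (Real.exp (-(2 * lam p)) * ∑ i, ∑ j, dotm (II p i j) (II p i j))
      = Real.exp (2 * lam p) * dotm (H p) (H p)
        + (1/2) * (fderiv ℝ (fun r => fderiv ℝ lam r (1,0)) p (1,0)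
            + fderiv ℝ (fun r => fderiv ℝ lam r (0,1)) p (0,1)) := by
  have hsymm : II p 0 1 = II p 1 0 := by
    rw [hII p 0 1, hII p 1 0]
    have h := symm2 hΦ p (dir 0) (dir 1)
    rw [h]
  have hgauss := gauss_II hΦ hlam hΦ₁ hΦ₂ hconf₀ hconf₁ hconf₂ II hII p
  set s : ℝ := Real.exp (-(2 * lam p)) with hs
  set E : ℝ := Real.exp (2 * lam p) with hE
  have hsE : s * E = 1 := by rw [hs, hE, ← Real.exp_add]; simp
  have hHd : dotm (H p) (H p) = ((1/2) * s)^2 *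
      (dotm (II p 0 0) (II p 0 0) + 2 * dotm (II p 0 0) (II p 1 1)
        + dotm (II p 1 1) (II p 1 1)) := by
    rw [hH p]
    simp only [dotm_smul_left, dotm_smul_right, dotm_add_left, dotm_add_right]
    have hc : dotm (II p 1 1) (II p 0 0) = dotm (II p 0 0) (II p 1 1) := dotm_comm _ _
    rw [hc]; ring
  rw [Fin.sum_univ_two, Fin.sum_univ_two, Fin.sum_univ_two, hHd, ← hsymm]
  have hsval : s = E⁻¹ := by rw [hs, hE, Real.exp_neg]
  have hEne : E ≠ 0 := by rw [hE]; exact (Real.exp_pos _).ne'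
  rw [hsval]
  field_simp
  linear_combination (-8) * hgauss

end Aux
end Geom2

namespace Aux

-- invariance of fderiv under a translation-periodicity
lemma fderiv_periodic {F : Type*} [NormedAddCommGroup F] [NormedSpace ℝ F]
    {f : ℝ × ℝ → F} (hf : Differentiable ℝ f) (c : ℝ × ℝ)
    (hper : ∀ q, f (q + c) = f q) (p : ℝ × ℝ) :
    fderiv ℝ f (p + c) = fderiv ℝ f p := by
  have h1 : HasFDerivAt (fun q => f (q + c)) (fderiv ℝ f (p + c)) p := by
    have := (hf (p + c)).hasFDerivAt.comp p ((hasFDerivAt_id p).add_const c)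
    simpa [Function.comp_def] using this
  have h2 : (fun q : ℝ × ℝ => f (q + c)) = f := funext hper
  rw [h2] at h1
  exact h1.fderiv.symm

-- ∫ over the unit box of an s-derivative of an s-periodic C¹ function is zero
lemma integral_ds_zero {F : ℝ × ℝ → ℝ} (hF : ContDiff ℝ (⊤ : ℕ∞) F)
    (hper : ∀ p : ℝ × ℝ, F (p.1 + 1, p.2) = F p) :
    ∫ q in (Set.Ioc (0:ℝ) 1 ×ˢ Set.Ioc (0:ℝ) 1), fderiv ℝ F q (1,0) = 0 := by
  set f : ℝ × ℝ → ℝ := fun q => fderiv ℝ F q (1,0) with hf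
  have hfc : Continuous f := (contDiff_fderiv_apply hF (1,0)).continuous
  have hint : IntegrableOn f (Set.Ioc (0:ℝ) 1 ×ˢ Set.Ioc (0:ℝ) 1) := by
    exact ((hfc.continuousOn).integrableOn_compact
      (isCompact_Icc.prod isCompact_Icc)).mono_set
      (Set.prod_mono Set.Ioc_subset_Icc_self Set.Ioc_subset_Icc_self)
  have hswap : ∫ q in (Set.Ioc (0:ℝ) 1 ×ˢ Set.Ioc (0:ℝ) 1), f q
      = ∫ y in Set.Ioc (0:ℝ) 1, ∫ x in Set.Ioc (0:ℝ) 1, f (x, y) := by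
    rw [MeasureTheory.Measure.volume_eq_prod] at hint ⊢
    rw [MeasureTheory.setIntegral_prod f hint]
    apply MeasureTheory.integral_integral_swap
    rw [MeasureTheory.Measure.prod_restrict]
    exact hint
  rw [hswap]
  have hinner : ∀ y : ℝ, ∫ x in Set.Ioc (0:ℝ) 1, f (x, y) = 0 := by
    intro y
    have heq : ∫ x in Set.Ioc (0:ℝ) 1, f (x, y) = ∫ x in (0:ℝ)..1, f (x, y) :=
      (intervalIntegral.integral_of_le zero_le_one).symm
    rw [heq]
    have hderiv : ∀ x ∈ Set.uIcc (0:ℝ) 1, HasDerivAt (fun x => F (x, y)) (f (x, y)) x := by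
      intro x _
      have h1 : HasDerivAt (fun x : ℝ => (x, y)) ((1:ℝ), (0:ℝ)) x :=
        (hasDerivAt_id x).prodMk (hasDerivAt_const x y)
      exact ((hF.differentiable (by simp)) (x, y)).hasFDerivAt.comp_hasDerivAt x h1
    rw [intervalIntegral.integral_eq_sub_of_hasDerivAt hderiv
      ((hfc.comp (continuous_id.prodMk continuous_const)).intervalIntegrable 0 1)]
    have := hper (0, y)
    simp only [zero_add] at this
    rw [this, sub_self]
  simp only [hinner, MeasureTheory.integral_zero]

-- ∫ over the unit box of a t-derivative of a t-periodic C¹ function is zero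
lemma integral_dt_zero {F : ℝ × ℝ → ℝ} (hF : ContDiff ℝ (⊤ : ℕ∞) F)
    (hper : ∀ p : ℝ × ℝ, F (p.1, p.2 + 1) = F p) :
    ∫ q in (Set.Ioc (0:ℝ) 1 ×ˢ Set.Ioc (0:ℝ) 1), fderiv ℝ F q (0,1) = 0 := by
  set f : ℝ × ℝ → ℝ := fun q => fderiv ℝ F q (0,1) with hf
  have hfc : Continuous f := (contDiff_fderiv_apply hF (0,1)).continuous
  have hint : IntegrableOn f (Set.Ioc (0:ℝ) 1 ×ˢ Set.Ioc (0:ℝ) 1) := by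
    exact ((hfc.continuousOn).integrableOn_compact
      (isCompact_Icc.prod isCompact_Icc)).mono_set
      (Set.prod_mono Set.Ioc_subset_Icc_self Set.Ioc_subset_Icc_self)
  have hswap : ∫ q in (Set.Ioc (0:ℝ) 1 ×ˢ Set.Ioc (0:ℝ) 1), f q
      = ∫ x in Set.Ioc (0:ℝ) 1, ∫ y in Set.Ioc (0:ℝ) 1, f (x, y) := by
    rw [MeasureTheory.Measure.volume_eq_prod] at hint ⊢
    exact MeasureTheory.setIntegral_prod f hint
  rw [hswap]
  have hinner : ∀ x : ℝ, ∫ y in Set.Ioc (0:ℝ) 1, f (x, y) = 0 := by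
    intro x
    have heq : ∫ y in Set.Ioc (0:ℝ) 1, f (x, y) = ∫ y in (0:ℝ)..1, f (x, y) :=
      (intervalIntegral.integral_of_le zero_le_one).symm
    rw [heq]
    have hderiv : ∀ y ∈ Set.uIcc (0:ℝ) 1, HasDerivAt (fun y => F (x, y)) (f (x, y)) y := by
      intro y _
      have h1 : HasDerivAt (fun y : ℝ => (x, y)) ((0:ℝ), (1:ℝ)) y :=
        (hasDerivAt_const y x).prodMk (hasDerivAt_id y)
      exact ((hF.differentiable (by simp)) (x, y)).hasFDerivAt.comp_hasDerivAt y h1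
    rw [intervalIntegral.integral_eq_sub_of_hasDerivAt hderiv
      ((hfc.comp (continuous_const.prodMk continuous_id)).intervalIntegrable 0 1)]
    have := hper (x, 0)
    simp only [zero_add] at this
    rw [this, sub_self]
  simp only [hinner, MeasureTheory.integral_zero]


lemma clm_dir_lin (T : ℝ × ℝ →L[ℝ] ℝ) (a b : ℝ) :
    T (a, b) = a * T (1,0) + b * T (0,1) := by
  have h : (a, b) = a • ((1:ℝ),(0:ℝ)) + b • ((0:ℝ),(1:ℝ)) := by simp [Prod.ext_iff]
  rw [h, map_add, T.map_smul, T.map_smul]; simp [smul_eq_mul]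

lemma integral_lap_zero (τ₁ τ₂ : ℝ) (hτ₂ : τ₂ ≠ 0) (lam : ℝ × ℝ → ℝ)
    (hlam : ContDiff ℝ (⊤ : ℕ∞) lam)
    (hperlam : ∀ p : ℝ × ℝ, lam (p.1 + 1, p.2) = lam p ∧ lam (p.1 + τ₁, p.2 + τ₂) = lam p) :
    ∫ q in (Set.Ioc (0:ℝ) 1 ×ˢ Set.Ioc (0:ℝ) 1),
      (fderiv ℝ (fun r => fderiv ℝ lam r (1,0)) (q.1 + q.2*τ₁, q.2*τ₂) (1,0)
        + fderiv ℝ (fun r => fderiv ℝ lam r (0,1)) (q.1 + q.2*τ₁, q.2*τ₂) (0,1)) = 0 := by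
  classical
  set L : ℝ × ℝ →L[ℝ] ℝ × ℝ :=
    ((ContinuousLinearMap.fst ℝ ℝ ℝ) + τ₁ • (ContinuousLinearMap.snd ℝ ℝ ℝ)).prod
      (τ₂ • (ContinuousLinearMap.snd ℝ ℝ ℝ)) with hL
  have hLval : ∀ q : ℝ × ℝ, L q = (q.1 + q.2*τ₁, q.2*τ₂) := by
    intro q
    simp [hL, ContinuousLinearMap.prod_apply, mul_comm]
  set μ : ℝ × ℝ → ℝ := fun q => lam (L q) with hμ
  have hμc : ContDiff ℝ (⊤ : ℕ∞) μ := hlam.comp L.contDiff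
  have hμd : Differentiable ℝ μ := hμc.differentiable (by simp)
  have hlamd : Differentiable ℝ lam := hlam.differentiable (by simp)
  have hch : ∀ q v, fderiv ℝ μ q v = fderiv ℝ lam (L q) (L v) := by
    intro q v
    have h : fderiv ℝ μ q = (fderiv ℝ lam (L q)).comp L := by
      rw [hμ]
      have := fderiv_comp (𝕜 := ℝ) q (hlamd (L q)) (L.differentiableAt)
      rw [show (fun q => lam (L q)) = lam ∘ L from rfl, this, L.fderiv]
    rw [h]; rfl
  have hL10 : L (1,0) = (1,0) := by rw [hLval]; norm_num
  have hL01 : L (0,1) = (τ₁, τ₂) := by rw [hLval]; norm_num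
  set μs : ℝ × ℝ → ℝ := fun q => fderiv ℝ μ q (1,0) with hμs
  set μt : ℝ × ℝ → ℝ := fun q => fderiv ℝ μ q (0,1) with hμt
  have hμsc : ContDiff ℝ (⊤ : ℕ∞) μs := contDiff_fderiv_apply hμc (1,0)
  have hμtc : ContDiff ℝ (⊤ : ℕ∞) μt := contDiff_fderiv_apply hμc (0,1)
  have hch2 : ∀ (u : ℝ × ℝ) (q w : ℝ × ℝ),
      fderiv ℝ (fun q => fderiv ℝ lam (L q) u) q w
        = fderiv ℝ (fun r => fderiv ℝ lam r u) (L q) (L w) := by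
    intro u q w
    have hcomp : (fun q => fderiv ℝ lam (L q) u) = (fun r => fderiv ℝ lam r u) ∘ L := rfl
    have hdiff : DifferentiableAt ℝ (fun r => fderiv ℝ lam r u) (L q) :=
      ((contDiff_fderiv_apply hlam u).differentiable (by simp)) (L q)
    rw [hcomp, fderiv_comp q hdiff L.differentiableAt, L.fderiv]; rfl
  have hμs_eq : μs = fun q => fderiv ℝ lam (L q) (1,0) := by
    funext q; show fderiv ℝ μ q (1,0) = _; rw [hch q (1,0), hL10]
  have hμt_eq : μt = fun q => fderiv ℝ lam (L q) (τ₁, τ₂) := by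
    funext q; show fderiv ℝ μ q (0,1) = _; rw [hch q (0,1), hL01]
  -- second derivative abbreviations
  set lam2 : ℝ × ℝ → ℝ × ℝ → ℝ × ℝ → ℝ :=
    fun p u w => fderiv ℝ (fun r => fderiv ℝ lam r u) p w with hlam2
  -- linearity of u ↦ lam2 p u w for the relevant directions
  have hulin : ∀ (p w : ℝ × ℝ), lam2 p (τ₁, τ₂) w
      = τ₁ * lam2 p (1,0) w + τ₂ * lam2 p (0,1) w := by
    intro p w
    have hfun : (fun r => fderiv ℝ lam r (τ₁, τ₂))
        = fun r => τ₁ * (fderiv ℝ lam r (1,0)) + τ₂ * (fderiv ℝ lam r (0,1)) := by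
      funext r; exact clm_dir_lin (fderiv ℝ lam r) τ₁ τ₂
    have hd1 : DifferentiableAt ℝ (fun r => fderiv ℝ lam r (1,0)) p :=
      ((contDiff_fderiv_apply hlam (1,0)).differentiable (by simp)) p
    have hd2 : DifferentiableAt ℝ (fun r => fderiv ℝ lam r (0,1)) p :=
      ((contDiff_fderiv_apply hlam (0,1)).differentiable (by simp)) p
    rw [hlam2]
    simp only [hfun]
    rw [fderiv_fun_add (hd1.const_mul τ₁) (hd2.const_mul τ₂)]
    rw [ContinuousLinearMap.add_apply, fderiv_const_mul hd1 τ₁, fderiv_const_mul hd2 τ₂]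
    simp [smul_eq_mul]
  -- second derivatives of μ in terms of lam2
  have hDss : ∀ q w, fderiv ℝ μs q w = lam2 (L q) (1,0) (L w) := by
    intro q w; rw [hμs_eq]; exact hch2 (1,0) q w
  have hDt : ∀ q w, fderiv ℝ μt q w = lam2 (L q) (τ₁, τ₂) (L w) := by
    intro q w; rw [hμt_eq]; exact hch2 (τ₁, τ₂) q w
  -- pointwise identity for the Laplacian along the parametrization
  have hpoint : ∀ q : ℝ × ℝ,
      lam2 (L q) (1,0) (1,0) + lam2 (L q) (0,1) (0,1)
        = fderiv ℝ μs q (1,0) + (1/τ₂^2) * (fderiv ℝ μt q (0,1)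
            - 2*τ₁ * (fderiv ℝ μt q (1,0)) + τ₁^2 * (fderiv ℝ μs q (1,0))) := by
    intro q
    have hA := hDss q (1,0)
    have hB := hDt q (1,0)
    have hC := hDt q (0,1)
    rw [hL10] at hA hB
    rw [hL01] at hC
    have hsymm := symm2 hlam (L q) ((1:ℝ),(0:ℝ)) ((0:ℝ),(1:ℝ))
    have hBlin : lam2 (L q) (τ₁, τ₂) (1,0)
        = τ₁ * lam2 (L q) (1,0) (1,0) + τ₂ * lam2 (L q) (0,1) (1,0) := hulin (L q) (1,0)
    have hClin : lam2 (L q) (τ₁, τ₂) (τ₁, τ₂)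
        = τ₁ * lam2 (L q) (1,0) (τ₁, τ₂) + τ₂ * lam2 (L q) (0,1) (τ₁, τ₂) := hulin _ _
    have e1 : lam2 (L q) (1,0) (τ₁, τ₂)
        = τ₁ * lam2 (L q) (1,0) (1,0) + τ₂ * lam2 (L q) (1,0) (0,1) :=
      clm_dir_lin (fderiv ℝ (fun r => fderiv ℝ lam r (1,0)) (L q)) τ₁ τ₂
    have e2 : lam2 (L q) (0,1) (τ₁, τ₂)
        = τ₁ * lam2 (L q) (0,1) (1,0) + τ₂ * lam2 (L q) (0,1) (0,1) :=
      clm_dir_lin (fderiv ℝ (fun r => fderiv ℝ lam r (0,1)) (L q)) τ₁ τ₂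
    have hsymm' : lam2 (L q) (1,0) (0,1) = lam2 (L q) (0,1) (1,0) := by
      rw [hlam2]; exact symm2 hlam (L q) _ _
    rw [hA, hB, hC, hBlin, hClin, e1, e2, hsymm']
    field_simp
    ring
  -- periodicity of μ and of its first derivatives
  have hμper1 : ∀ q : ℝ × ℝ, μ (q + (1,0)) = μ q := by
    intro q
    have h1 : L (q + (1,0)) = L q + (1,0) := by
      rw [map_add, hL10]
    rw [hμ]
    show lam (L (q + (1,0))) = lam (L q)
    rw [h1]
    have := (hperlam (L q)).1
    have h2 : L q + ((1:ℝ),(0:ℝ)) = ((L q).1 + 1, (L q).2) := by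
      simp [Prod.ext_iff]
    rw [h2]; exact this
  have hμper2 : ∀ q : ℝ × ℝ, μ (q + (0,1)) = μ q := by
    intro q
    have h1 : L (q + (0,1)) = L q + (τ₁, τ₂) := by
      rw [map_add, hL01]
    rw [hμ]
    show lam (L (q + (0,1))) = lam (L q)
    rw [h1]
    have := (hperlam (L q)).2
    have h2 : L q + ((τ₁:ℝ), τ₂) = ((L q).1 + τ₁, (L q).2 + τ₂) := by
      simp [Prod.ext_iff]
    rw [h2]; exact this
  have hfdper1 : ∀ p : ℝ × ℝ, fderiv ℝ μ (p + (1,0)) = fderiv ℝ μ p :=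
    fderiv_periodic hμd (1,0) hμper1
  have hfdper2 : ∀ p : ℝ × ℝ, fderiv ℝ μ (p + (0,1)) = fderiv ℝ μ p :=
    fderiv_periodic hμd (0,1) hμper2
  have hμs_per_s : ∀ p : ℝ × ℝ, μs (p.1 + 1, p.2) = μs p := by
    intro p
    have h : (p.1 + 1, p.2) = p + ((1:ℝ),(0:ℝ)) := by simp [Prod.ext_iff]
    rw [hμs]; show fderiv ℝ μ (p.1+1, p.2) (1,0) = fderiv ℝ μ p (1,0)
    rw [h, hfdper1]
  have hμt_per_s : ∀ p : ℝ × ℝ, μt (p.1 + 1, p.2) = μt p := by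
    intro p
    have h : (p.1 + 1, p.2) = p + ((1:ℝ),(0:ℝ)) := by simp [Prod.ext_iff]
    rw [hμt]; show fderiv ℝ μ (p.1+1, p.2) (0,1) = fderiv ℝ μ p (0,1)
    rw [h, hfdper1]
  have hμt_per_t : ∀ p : ℝ × ℝ, μt (p.1, p.2 + 1) = μt p := by
    intro p
    have h : (p.1, p.2 + 1) = p + ((0:ℝ),(1:ℝ)) := by simp [Prod.ext_iff]
    rw [hμt]; show fderiv ℝ μ (p.1, p.2+1) (0,1) = fderiv ℝ μ p (0,1)
    rw [h, hfdper2]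
  -- rewrite the integrand
  have hint_eq : (fun q : ℝ × ℝ =>
      fderiv ℝ (fun r => fderiv ℝ lam r (1,0)) (q.1 + q.2*τ₁, q.2*τ₂) (1,0)
        + fderiv ℝ (fun r => fderiv ℝ lam r (0,1)) (q.1 + q.2*τ₁, q.2*τ₂) (0,1))
      = fun q => fderiv ℝ μs q (1,0) + (1/τ₂^2) * (fderiv ℝ μt q (0,1)
            - 2*τ₁ * (fderiv ℝ μt q (1,0)) + τ₁^2 * (fderiv ℝ μs q (1,0))) := by
    funext q
    have := hpoint q
    rw [hLval q] at this
    exact this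
  rw [hint_eq]
  -- integrability of the pieces
  have box := Set.Ioc (0:ℝ) 1 ×ˢ Set.Ioc (0:ℝ) 1
  have hIOn : ∀ (f : ℝ × ℝ → ℝ), Continuous f →
      IntegrableOn f (Set.Ioc (0:ℝ) 1 ×ˢ Set.Ioc (0:ℝ) 1) := by
    intro f hf
    exact ((hf.continuousOn).integrableOn_compact
      (isCompact_Icc.prod isCompact_Icc)).mono_set
      (Set.prod_mono Set.Ioc_subset_Icc_self Set.Ioc_subset_Icc_self)
  have hIss := hIOn _ (contDiff_fderiv_apply hμsc (1,0)).continuous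
  have hIst := hIOn _ (contDiff_fderiv_apply hμtc (1,0)).continuous
  have hItt := hIOn _ (contDiff_fderiv_apply hμtc (0,1)).continuous
  set c := (1/τ₂^2 : ℝ)
  set A : ℝ × ℝ → ℝ := fun q => fderiv ℝ μs q (1,0) with hA
  set B : ℝ × ℝ → ℝ := fun q => fderiv ℝ μt q (1,0) with hB
  set C : ℝ × ℝ → ℝ := fun q => fderiv ℝ μt q (0,1) with hC
  have hIcomb : IntegrableOn (fun q => C q - 2*τ₁ * B q + τ₁^2 * A q)
      (Set.Ioc (0:ℝ) 1 ×ˢ Set.Ioc (0:ℝ) 1) :=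
    (hItt.sub (hIst.const_mul (2*τ₁))).add (hIss.const_mul (τ₁^2))
  have e0 : ∫ q in (Set.Ioc (0:ℝ) 1 ×ˢ Set.Ioc (0:ℝ) 1),
      (A q + c * (C q - 2*τ₁ * B q + τ₁^2 * A q))
      = (∫ q in (Set.Ioc (0:ℝ) 1 ×ˢ Set.Ioc (0:ℝ) 1), A q)
        + ∫ q in (Set.Ioc (0:ℝ) 1 ×ˢ Set.Ioc (0:ℝ) 1), c * (C q - 2*τ₁ * B q + τ₁^2 * A q) :=
    MeasureTheory.integral_add hIss (hIcomb.const_mul c)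
  have e1 : ∫ q in (Set.Ioc (0:ℝ) 1 ×ˢ Set.Ioc (0:ℝ) 1), c * (C q - 2*τ₁ * B q + τ₁^2 * A q)
      = c * ∫ q in (Set.Ioc (0:ℝ) 1 ×ˢ Set.Ioc (0:ℝ) 1), (C q - 2*τ₁ * B q + τ₁^2 * A q) :=
    integral_const_mul c _
  have hsub : IntegrableOn (fun q => C q - 2*τ₁ * B q) (Set.Ioc (0:ℝ) 1 ×ˢ Set.Ioc (0:ℝ) 1) :=
    hItt.sub (hIst.const_mul (2*τ₁))
  have e2 : ∫ q in (Set.Ioc (0:ℝ) 1 ×ˢ Set.Ioc (0:ℝ) 1), (C q - 2*τ₁ * B q + τ₁^2 * A q)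
      = ((∫ q in (Set.Ioc (0:ℝ) 1 ×ˢ Set.Ioc (0:ℝ) 1), C q)
          - ∫ q in (Set.Ioc (0:ℝ) 1 ×ˢ Set.Ioc (0:ℝ) 1), 2*τ₁ * B q)
        + ∫ q in (Set.Ioc (0:ℝ) 1 ×ˢ Set.Ioc (0:ℝ) 1), τ₁^2 * A q := by
    rw [MeasureTheory.integral_add hsub (hIss.const_mul (τ₁^2))]
    rw [MeasureTheory.integral_sub hItt (hIst.const_mul (2*τ₁))]
  have zA : ∫ q in (Set.Ioc (0:ℝ) 1 ×ˢ Set.Ioc (0:ℝ) 1), A q = 0 :=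
    integral_ds_zero hμsc hμs_per_s
  have zB : ∫ q in (Set.Ioc (0:ℝ) 1 ×ˢ Set.Ioc (0:ℝ) 1), B q = 0 :=
    integral_ds_zero hμtc hμt_per_s
  have zC : ∫ q in (Set.Ioc (0:ℝ) 1 ×ˢ Set.Ioc (0:ℝ) 1), C q = 0 :=
    integral_dt_zero hμtc hμt_per_t
  rw [e0, e1, e2, integral_const_mul, integral_const_mul, zA, zB, zC]
  ring


lemma cont_dotm {m : ℕ} {α : Type*} [TopologicalSpace α] {f g : α → Fin m → ℝ}
    (hf : Continuous f) (hg : Continuous g) : Continuous (fun q => dotm (f q) (g q)) := by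
  have h : (fun q => dotm (f q) (g q)) = fun q => ∑ i, f q i * g q i := rfl
  rw [h]
  exact continuous_finset_sum _ fun i _ =>
    ((continuous_apply i).comp hf).mul ((continuous_apply i).comp hg)

lemma integrableOn_box {f : ℝ × ℝ → ℝ} (hf : Continuous f) :
    MeasureTheory.IntegrableOn f (Set.Ioc (0:ℝ) 1 ×ˢ Set.Ioc (0:ℝ) 1) :=
  ((hf.continuousOn).integrableOn_compact (isCompact_Icc.prod isCompact_Icc)).mono_set
    (Set.prod_mono Set.Ioc_subset_Icc_self Set.Ioc_subset_Icc_self)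

end Aux

/-- Decomposition of the frame energy: `F(Φ,e) = F_T(Φ,e) + W(Φ)` and
`(1/4)∫|Î|² = ∫|H|²` for a conformal immersion of a torus (realized as a doubly
periodic map with respect to the lattice ℤ(1,0) ⊕ ℤ(τ₁,τ₂)), with all integrals
computed over a fundamental domain via the parametrization (s,t) ↦ (s+tτ₁, tτ₂). -/
theorem stmt16 (m : ℕ) (hm : 3 ≤ m) (τ₁ τ₂ : ℝ) (hτ₂ : 0 < τ₂)
    (Φ e₁ e₂ : ℝ × ℝ → Fin m → ℝ) (lam : ℝ × ℝ → ℝ)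
    (hΦ : ContDiff ℝ (⊤ : ℕ∞) Φ) (he₁ : ContDiff ℝ (⊤ : ℕ∞) e₁) (he₂ : ContDiff ℝ (⊤ : ℕ∞) e₂)
    (hlam : ContDiff ℝ (⊤ : ℕ∞) lam)
    -- double periodicity : the data lives on the torus ℝ²/(ℤ(1,0) ⊕ ℤ(τ₁,τ₂))
    (hperΦ : ∀ p : ℝ × ℝ, Φ (p.1 + 1, p.2) = Φ p ∧ Φ (p.1 + τ₁, p.2 + τ₂) = Φ p)
    (hpere₁ : ∀ p : ℝ × ℝ, e₁ (p.1 + 1, p.2) = e₁ p ∧ e₁ (p.1 + τ₁, p.2 + τ₂) = e₁ p)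
    (hpere₂ : ∀ p : ℝ × ℝ, e₂ (p.1 + 1, p.2) = e₂ p ∧ e₂ (p.1 + τ₁, p.2 + τ₂) = e₂ p)
    (hperlam : ∀ p : ℝ × ℝ, lam (p.1 + 1, p.2) = lam p ∧ lam (p.1 + τ₁, p.2 + τ₂) = lam p)
    (Φ₁ Φ₂ : ℝ × ℝ → Fin m → ℝ)
    (hΦ₁ : ∀ p, Φ₁ p = fderiv ℝ Φ p (1,0))
    (hΦ₂ : ∀ p, Φ₂ p = fderiv ℝ Φ p (0,1))
    -- conformality
    (hconf₀ : ∀ p, dotm (Φ₁ p) (Φ₂ p) = 0)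
    (hconf₁ : ∀ p, dotm (Φ₁ p) (Φ₁ p) = Real.exp (2 * lam p))
    (hconf₂ : ∀ p, dotm (Φ₂ p) (Φ₂ p) = Real.exp (2 * lam p))
    -- (e₁, e₂) is an orthonormal moving frame tangent to the immersion
    (hon : ∀ p, dotm (e₁ p) (e₁ p) = 1 ∧ dotm (e₂ p) (e₂ p) = 1 ∧ dotm (e₁ p) (e₂ p) = 0)
    (htan : ∀ p, ∃ a b c d : ℝ, e₁ p = a • Φ₁ p + b • Φ₂ p ∧ e₂ p = c • Φ₁ p + d • Φ₂ p)
    -- vector second fundamental form Î_{ij} = π_n(∂²_{ij}Φ)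
    (II : ℝ × ℝ → Fin 2 → Fin 2 → Fin m → ℝ)
    (hII : ∀ p i j, II p i j =
      fderiv ℝ (fun q => fderiv ℝ Φ q (dir i)) p (dir j)
        - (Real.exp (-(2 * lam p)) *
            dotm (fderiv ℝ (fun q => fderiv ℝ Φ q (dir i)) p (dir j)) (Φ₁ p)) • Φ₁ p
        - (Real.exp (-(2 * lam p)) *
            dotm (fderiv ℝ (fun q => fderiv ℝ Φ q (dir i)) p (dir j)) (Φ₂ p)) • Φ₂ p)
    -- mean curvature vector
    (H : ℝ × ℝ → Fin m → ℝ)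
    (hH : ∀ p, H p = ((1/2) * Real.exp (-(2 * lam p))) • (II p 0 0 + II p 1 1)) :
    -- frame energy = tangential frame energy + Willmore energy, and
    -- (1/4)∫|Î|² dvol = ∫|H|² dvol (Gauss–Bonnet on the torus)
    ((1/4) * (∫ q in (Set.Ioc (0:ℝ) 1 ×ˢ Set.Ioc (0:ℝ) 1),
        (dotm (fderiv ℝ e₁ (q.1 + q.2*τ₁, q.2*τ₂) (1,0))
              (fderiv ℝ e₁ (q.1 + q.2*τ₁, q.2*τ₂) (1,0))
          + dotm (fderiv ℝ e₁ (q.1 + q.2*τ₁, q.2*τ₂) (0,1))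
              (fderiv ℝ e₁ (q.1 + q.2*τ₁, q.2*τ₂) (0,1))
          + dotm (fderiv ℝ e₂ (q.1 + q.2*τ₁, q.2*τ₂) (1,0))
              (fderiv ℝ e₂ (q.1 + q.2*τ₁, q.2*τ₂) (1,0))
          + dotm (fderiv ℝ e₂ (q.1 + q.2*τ₁, q.2*τ₂) (0,1))
              (fderiv ℝ e₂ (q.1 + q.2*τ₁, q.2*τ₂) (0,1))))
      = (1/2) * (∫ q in (Set.Ioc (0:ℝ) 1 ×ˢ Set.Ioc (0:ℝ) 1),
          ((dotm (e₁ (q.1 + q.2*τ₁, q.2*τ₂))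
              (fderiv ℝ e₂ (q.1 + q.2*τ₁, q.2*τ₂) (1,0)))^2
            + (dotm (e₁ (q.1 + q.2*τ₁, q.2*τ₂))
                (fderiv ℝ e₂ (q.1 + q.2*τ₁, q.2*τ₂) (0,1)))^2))
        + (1/4) * (∫ q in (Set.Ioc (0:ℝ) 1 ×ˢ Set.Ioc (0:ℝ) 1),
            Real.exp (-(2 * lam (q.1 + q.2*τ₁, q.2*τ₂))) *
              ∑ i, ∑ j, dotm (II (q.1 + q.2*τ₁, q.2*τ₂) i j)
                             (II (q.1 + q.2*τ₁, q.2*τ₂) i j))) ∧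
    ((1/4) * (∫ q in (Set.Ioc (0:ℝ) 1 ×ˢ Set.Ioc (0:ℝ) 1),
        Real.exp (-(2 * lam (q.1 + q.2*τ₁, q.2*τ₂))) *
          ∑ i, ∑ j, dotm (II (q.1 + q.2*τ₁, q.2*τ₂) i j)
                         (II (q.1 + q.2*τ₁, q.2*τ₂) i j))
      = ∫ q in (Set.Ioc (0:ℝ) 1 ×ˢ Set.Ioc (0:ℝ) 1),
          Real.exp (2 * lam (q.1 + q.2*τ₁, q.2*τ₂)) *
            dotm (H (q.1 + q.2*τ₁, q.2*τ₂)) (H (q.1 + q.2*τ₁, q.2*τ₂))) := by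
  classical
  have hτne : τ₂ ≠ 0 := hτ₂.ne'
  have hψc : Continuous (fun q : ℝ × ℝ => (q.1 + q.2*τ₁, q.2*τ₂)) := by fun_prop
  have hΦ₁c' : ContDiff ℝ (⊤ : ℕ∞) Φ₁ := Aux.hΦ₁c hΦ hΦ₁
  have hΦ₂c' : ContDiff ℝ (⊤ : ℕ∞) Φ₂ := Aux.hΦ₂c hΦ hΦ₂
  have hscont : Continuous (fun p : ℝ × ℝ => Real.exp (-(2 * lam p))) :=
    Real.continuous_exp.comp (continuous_const.mul hlam.continuous).neg
  have hEcont : Continuous (fun p : ℝ × ℝ => Real.exp (2 * lam p)) :=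
    Real.continuous_exp.comp (continuous_const.mul hlam.continuous)
  have hIIc : ∀ i j : Fin 2, Continuous (fun p => II p i j) := by
    intro i j
    have h : (fun p => II p i j) = fun p =>
        fderiv ℝ (fun q => fderiv ℝ Φ q (dir i)) p (dir j)
          - (Real.exp (-(2 * lam p)) *
              dotm (fderiv ℝ (fun q => fderiv ℝ Φ q (dir i)) p (dir j)) (Φ₁ p)) • Φ₁ p
          - (Real.exp (-(2 * lam p)) *
              dotm (fderiv ℝ (fun q => fderiv ℝ Φ q (dir i)) p (dir j)) (Φ₂ p)) • Φ₂ p :=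
      funext fun p => hII p i j
    rw [h]
    have c1 : Continuous (fun p => fderiv ℝ (fun q => fderiv ℝ Φ q (dir i)) p (dir j)) :=
      (Aux.contDiff_fderiv_apply (Aux.contDiff_fderiv_apply hΦ (dir i)) (dir j)).continuous
    exact (c1.sub ((hscont.mul (Aux.cont_dotm c1 hΦ₁c'.continuous)).smul
      hΦ₁c'.continuous)).sub
      ((hscont.mul (Aux.cont_dotm c1 hΦ₂c'.continuous)).smul hΦ₂c'.continuous)
  have hHc : Continuous H := by
    have h : H = fun p => ((1/2) * Real.exp (-(2 * lam p))) • (II p 0 0 + II p 1 1) :=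
      funext hH
    rw [h]
    exact (continuous_const.mul hscont).smul ((hIIc 0 0).add (hIIc 1 1))
  -- continuity / integrability of the integrands
  have hGc : Continuous (fun q : ℝ × ℝ =>
      (dotm (e₁ (q.1 + q.2*τ₁, q.2*τ₂)) (fderiv ℝ e₂ (q.1 + q.2*τ₁, q.2*τ₂) (1,0)))^2
        + (dotm (e₁ (q.1 + q.2*τ₁, q.2*τ₂)) (fderiv ℝ e₂ (q.1 + q.2*τ₁, q.2*τ₂) (0,1)))^2) := by
    have c1 := Aux.cont_dotm (he₁.continuous.comp hψc)
      (((Aux.contDiff_fderiv_apply he₂ (1,0)).continuous).comp hψc)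
    have c2 := Aux.cont_dotm (he₁.continuous.comp hψc)
      (((Aux.contDiff_fderiv_apply he₂ (0,1)).continuous).comp hψc)
    exact (c1.pow 2).add (c2.pow 2)
  have hBc : Continuous (fun q : ℝ × ℝ =>
      Real.exp (-(2 * lam (q.1 + q.2*τ₁, q.2*τ₂))) *
        ∑ i, ∑ j, dotm (II (q.1 + q.2*τ₁, q.2*τ₂) i j) (II (q.1 + q.2*τ₁, q.2*τ₂) i j)) := by
    exact (hscont.comp hψc).mul (continuous_finset_sum _ fun i _ =>
      continuous_finset_sum _ fun j _ =>
        Aux.cont_dotm ((hIIc i j).comp hψc) ((hIIc i j).comp hψc))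
  have hWc : Continuous (fun q : ℝ × ℝ =>
      Real.exp (2 * lam (q.1 + q.2*τ₁, q.2*τ₂)) *
        dotm (H (q.1 + q.2*τ₁, q.2*τ₂)) (H (q.1 + q.2*τ₁, q.2*τ₂))) :=
    (hEcont.comp hψc).mul (Aux.cont_dotm (hHc.comp hψc) (hHc.comp hψc))
  have hDc : Continuous (fun q : ℝ × ℝ =>
      fderiv ℝ (fun r => fderiv ℝ lam r (1,0)) (q.1 + q.2*τ₁, q.2*τ₂) (1,0)
        + fderiv ℝ (fun r => fderiv ℝ lam r (0,1)) (q.1 + q.2*τ₁, q.2*τ₂) (0,1)) := by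
    exact (((Aux.contDiff_fderiv_apply (Aux.contDiff_fderiv_apply hlam (1,0))
        (1,0)).continuous).comp hψc).add
      (((Aux.contDiff_fderiv_apply (Aux.contDiff_fderiv_apply hlam (0,1))
        (0,1)).continuous).comp hψc)
  have hGint := Aux.integrableOn_box hGc
  have hBint := Aux.integrableOn_box hBc
  have hWint := Aux.integrableOn_box hWc
  have hDint := Aux.integrableOn_box hDc
  constructor
  · -- frame energy decomposition
    have h1 : (∫ q in (Set.Ioc (0:ℝ) 1 ×ˢ Set.Ioc (0:ℝ) 1),
        (dotm (fderiv ℝ e₁ (q.1 + q.2*τ₁, q.2*τ₂) (1,0))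
              (fderiv ℝ e₁ (q.1 + q.2*τ₁, q.2*τ₂) (1,0))
          + dotm (fderiv ℝ e₁ (q.1 + q.2*τ₁, q.2*τ₂) (0,1))
              (fderiv ℝ e₁ (q.1 + q.2*τ₁, q.2*τ₂) (0,1))
          + dotm (fderiv ℝ e₂ (q.1 + q.2*τ₁, q.2*τ₂) (1,0))
              (fderiv ℝ e₂ (q.1 + q.2*τ₁, q.2*τ₂) (1,0))
          + dotm (fderiv ℝ e₂ (q.1 + q.2*τ₁, q.2*τ₂) (0,1))
              (fderiv ℝ e₂ (q.1 + q.2*τ₁, q.2*τ₂) (0,1))))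
        = 2 * (∫ q in (Set.Ioc (0:ℝ) 1 ×ˢ Set.Ioc (0:ℝ) 1),
            ((dotm (e₁ (q.1 + q.2*τ₁, q.2*τ₂))
                (fderiv ℝ e₂ (q.1 + q.2*τ₁, q.2*τ₂) (1,0)))^2
              + (dotm (e₁ (q.1 + q.2*τ₁, q.2*τ₂))
                  (fderiv ℝ e₂ (q.1 + q.2*τ₁, q.2*τ₂) (0,1)))^2))
          + ∫ q in (Set.Ioc (0:ℝ) 1 ×ˢ Set.Ioc (0:ℝ) 1),
              Real.exp (-(2 * lam (q.1 + q.2*τ₁, q.2*τ₂))) *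
                ∑ i, ∑ j, dotm (II (q.1 + q.2*τ₁, q.2*τ₂) i j)
                               (II (q.1 + q.2*τ₁, q.2*τ₂) i j) := by
      rw [← MeasureTheory.integral_const_mul, ← MeasureTheory.integral_add
        (hGint.const_mul 2) hBint]
      apply MeasureTheory.integral_congr_ae
      apply MeasureTheory.ae_of_all
      intro q
      exact Aux.frame_point hΦ hlam hΦ₁ hΦ₂ hconf₀ hconf₁ hconf₂ e₁ e₂ he₁ he₂ hon htan
        II hII (q.1 + q.2*τ₁, q.2*τ₂)
    rw [h1]
    ring
  · -- Willmore identity via Gauss-Bonnet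
    have hlap := Aux.integral_lap_zero τ₁ τ₂ hτne lam hlam hperlam
    have h2 : (∫ q in (Set.Ioc (0:ℝ) 1 ×ˢ Set.Ioc (0:ℝ) 1),
        Real.exp (-(2 * lam (q.1 + q.2*τ₁, q.2*τ₂))) *
          ∑ i, ∑ j, dotm (II (q.1 + q.2*τ₁, q.2*τ₂) i j)
                         (II (q.1 + q.2*τ₁, q.2*τ₂) i j))
        = 4 * (∫ q in (Set.Ioc (0:ℝ) 1 ×ˢ Set.Ioc (0:ℝ) 1),
            Real.exp (2 * lam (q.1 + q.2*τ₁, q.2*τ₂)) *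
              dotm (H (q.1 + q.2*τ₁, q.2*τ₂)) (H (q.1 + q.2*τ₁, q.2*τ₂)))
          + 2 * (∫ q in (Set.Ioc (0:ℝ) 1 ×ˢ Set.Ioc (0:ℝ) 1),
              (fderiv ℝ (fun r => fderiv ℝ lam r (1,0)) (q.1 + q.2*τ₁, q.2*τ₂) (1,0)
                + fderiv ℝ (fun r => fderiv ℝ lam r (0,1)) (q.1 + q.2*τ₁, q.2*τ₂) (0,1))) := by
      rw [← MeasureTheory.integral_const_mul, ← MeasureTheory.integral_const_mul,
        ← MeasureTheory.integral_add (hWint.const_mul 4) (hDint.const_mul 2)]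
      apply MeasureTheory.integral_congr_ae
      apply MeasureTheory.ae_of_all
      intro q
      have := Aux.willmore_point hΦ hlam hΦ₁ hΦ₂ hconf₀ hconf₁ hconf₂ II hII H hH
        (q.1 + q.2*τ₁, q.2*τ₂)
      dsimp only
      linarith [this]
    rw [h2, hlap]
    ring
end
end

section
/- The function g(τ₁, τ₂) := (τ₂ + 1/τ₂) · (1 − τ₁²)/((1 − τ₁²) + τ₁⁴) tends to +∞ as τ₂ → ∞ uniformly for τ₁ ∈ [−1/2, 1/2]; consequently, for every C > 0 the sublevel set {(τ₁, τ₂) ∈ M : π²·g(τ₁, τ₂) ≤ C} is contained in a compact subset of the fundamental domain M = {(τ₁,τ₂) : τ₂ > 0, −1/2 < τ₁ < 1/2, τ₁² + τ₂² ≥ 1}. -/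
open Real

/-- The fundamental domain `M` of the moduli space of flat tori. -/
def Mfund : Set (ℝ × ℝ) :=
  {p | 0 < p.2 ∧ -(1/2) < p.1 ∧ p.1 < 1/2 ∧ 1 ≤ p.1^2 + p.2^2}

/-- The lower-bound function `g(τ₁,τ₂) = (τ₂+1/τ₂)(1-τ₁²)/((1-τ₁²)+τ₁⁴)`. -/
noncomputable def gfun (τ₁ τ₂ : ℝ) : ℝ :=
  (τ₂ + 1/τ₂) * (1 - τ₁^2) / ((1 - τ₁^2) + τ₁^4)

lemma gfun_lower : ∀ C : ℝ, ∃ T : ℝ, ∀ τ₂ : ℝ, T ≤ τ₂ →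
      ∀ τ₁ ∈ Set.Icc (-(1/2) : ℝ) (1/2), C ≤ gfun τ₁ τ₂ := by
  intro C
  refine ⟨max 1 (17 * C / 12), fun τ₂ hT τ₁ hτ₁ => ?_⟩
  have h1 : (1:ℝ) ≤ τ₂ := le_trans (le_max_left _ _) hT
  have h2 : 17 * C / 12 ≤ τ₂ := le_trans (le_max_right _ _) hT
  have hpos : 0 < τ₂ := by linarith
  have hu : 0 < 1 / τ₂ := by positivity
  obtain ⟨ha, hb⟩ := hτ₁
  have hsq : τ₁ ^ 2 ≤ 1/4 := by nlinarith
  have hd : 0 < (1 - τ₁^2) + τ₁^4 := by nlinarith [sq_nonneg (τ₁^2)]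
  rw [gfun, le_div_iff₀ hd]
  rcases le_or_gt 0 C with hc | hc
  · nlinarith [mul_nonneg hu.le (by nlinarith : (0:ℝ) ≤ 1 - τ₁^2),
      mul_le_mul_of_nonneg_left hsq hpos.le, sq_nonneg (τ₁^2),
      mul_nonneg hc (sq_nonneg (τ₁^2))]
  · nlinarith [mul_nonneg hu.le (by nlinarith : (0:ℝ) ≤ 1 - τ₁^2),
      mul_pos (neg_pos.mpr hc) hd, mul_le_mul_of_nonneg_left hsq hpos.le]

theorem stmt18 :
    (∀ C : ℝ, ∃ T : ℝ, ∀ τ₂ : ℝ, T ≤ τ₂ →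
      ∀ τ₁ ∈ Set.Icc (-(1/2) : ℝ) (1/2), C ≤ gfun τ₁ τ₂) ∧
    (∀ C : ℝ, 0 < C → ∃ K : Set (ℝ × ℝ), IsCompact K ∧
      {p : ℝ × ℝ | p ∈ Mfund ∧ π^2 * gfun p.1 p.2 ≤ C} ⊆ K) := by
  refine ⟨gfun_lower, fun C hC => ?_⟩
  obtain ⟨T, hT⟩ := gfun_lower (C / π ^ 2 + 1)
  refine ⟨Set.Icc (-(1/2), 0) (1/2, max T 0), isCompact_Icc, ?_⟩
  rintro ⟨τ₁, τ₂⟩ ⟨⟨hpos, ha, hb, _⟩, hle⟩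
  have hπ : (0:ℝ) < π ^ 2 := by positivity
  constructor
  · exact ⟨le_of_lt ha, le_of_lt hpos⟩
  · refine ⟨le_of_lt hb, ?_⟩
    by_contra h
    push_neg at h
    have h2 : max T 0 ≤ τ₂ := le_of_lt h
    have := hT τ₂ (le_trans (le_max_left _ _) h2) τ₁ ⟨le_of_lt ha, le_of_lt hb⟩
    have hg : C / π ^ 2 + 1 ≤ C / π ^ 2 := le_trans this (by
      rw [le_div_iff₀ hπ]; linarith [mul_comm (gfun τ₁ τ₂) (π^2)])
    linarith
end
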